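/- arXiv:2110.03443 — 9 statements merged into one kernel-verified Lean document; each statement's English description precedes it below -/
import Mathlib

section
/- Let Ω be a random real symmetric positive semidefinite n×n matrix and v a random vector in ℝⁿ, defined on a common probability space, such that Ω, Ωv and vᵀΩv are all integrable. Then there exist a vector v̄ ∈ ℝⁿ and a constant c ∈ ℝ such that for every f ∈ ℝⁿ, E[(f − v)ᵀ Ω (f − v)] = (f − v̄)ᵀ E[Ω] (f − v̄) + c. In particular, the expected quadratic loss is itself, up to an additive constant not depending on f, a quadratic loss with weight matrix E[Ω] and some bliss point v̄. -/
open MeasureTheory Matrix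

lemma psd_exists_solution {n : ℕ} (A : Matrix (Fin n) (Fin n) ℝ) (hA : A.PosSemidef)
    (b : Fin n → ℝ) (hb : ∀ x : Fin n → ℝ, A *ᵥ x = 0 → b ⬝ᵥ x = 0) :
    ∃ w : Fin n → ℝ, A *ᵥ w = b := by
  classical
  set K : Submodule ℝ (EuclideanSpace ℝ (Fin n)) := LinearMap.range (Matrix.toEuclideanLin A)
  obtain ⟨y, hy, z, hz, hbyz⟩ := K.exists_add_mem_mem_orthogonal
    ((WithLp.equiv 2 (Fin n → ℝ)).symm b)
  have hzmem : ∀ x : Fin n → ℝ, (A *ᵥ x) ⬝ᵥ (WithLp.equiv 2 (Fin n → ℝ) z) = 0 := by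
    intro x
    have := (Submodule.mem_orthogonal K z).mp hz
      (Matrix.toEuclideanLin A ((WithLp.equiv 2 (Fin n → ℝ)).symm x))
      (LinearMap.mem_range_self _ _)
    rw [show Matrix.toEuclideanLin A ((WithLp.equiv 2 (Fin n → ℝ)).symm x) = WithLp.toLp 2 (A *ᵥ x) from rfl] at this
    simpa [PiLp.inner_apply, dotProduct, mul_comm] using this
  set z' := WithLp.equiv 2 (Fin n → ℝ) z with hz'
  have hAz : A *ᵥ z' = 0 := by
    have h0 : z' ⬝ᵥ (A *ᵥ z') = 0 := by
      rw [dotProduct_comm]; exact hzmem z'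
    exact (hA.dotProduct_mulVec_zero_iff z').mp (by simpa using h0)
  have hbz : b ⬝ᵥ z' = 0 := hb z' hAz
  have hyz : y ⬝ᵥ z = 0 := by
    have := (Submodule.mem_orthogonal K z).mp hz y hy
    simpa [PiLp.inner_apply, dotProduct, mul_comm] using this
  have hzzero : z = 0 := by
    have h1 : (z' : Fin n → ℝ) ⬝ᵥ z' = 0 := by
      have hb' : (b : Fin n → ℝ) = y + z := by
        have := congrArg (WithLp.equiv 2 (Fin n → ℝ)) hbyz
        simpa using this
      have : ((y : Fin n → ℝ) + (z : Fin n → ℝ)) ⬝ᵥ z' = 0 := by rw [← hb']; exact hbz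
      rw [add_dotProduct] at this
      have hyz' : (y : Fin n → ℝ) ⬝ᵥ z' = 0 := hyz
      have hzz : (z : Fin n → ℝ) ⬝ᵥ z' = z' ⬝ᵥ z' := rfl
      linarith
    exact (WithLp.equiv 2 (Fin n → ℝ)).injective (dotProduct_self_eq_zero.mp h1)
  rw [hzzero, add_zero] at hbyz
  obtain ⟨x, hx⟩ := hy
  refine ⟨WithLp.equiv 2 (Fin n → ℝ) x, ?_⟩
  have := congrArg (WithLp.equiv 2 (Fin n → ℝ)) (hx.trans hbyz.symm)
  change A *ᵥ (WithLp.equiv 2 (Fin n → ℝ)) x = b at this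
  simpa using this

/-- The expected quadratic loss with a random PSD weight matrix `M` and random
bliss point `v` is, up to an additive constant, a quadratic loss with weight matrix `E[M]`
and some bliss point `vbar`. -/
theorem expected_quadratic_loss_is_quadratic
    {α : Type*} [MeasurableSpace α] (μ : Measure α) [IsProbabilityMeasure μ]
    (n : ℕ) (hn : 0 < n)
    (M : α → Matrix (Fin n) (Fin n) ℝ) (v : α → Fin n → ℝ)
    (hpsd : ∀ ω, (M ω).PosSemidef)
    (hM : ∀ i j, Integrable (fun ω => M ω i j) μ)
    (hMv : ∀ i, Integrable (fun ω => (M ω *ᵥ v ω) i) μ)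
    (hvMv : Integrable (fun ω => v ω ⬝ᵥ (M ω *ᵥ v ω)) μ) :
    ∃ (vbar : Fin n → ℝ) (c : ℝ), ∀ f : Fin n → ℝ,
      ∫ ω, (f - v ω) ⬝ᵥ (M ω *ᵥ (f - v ω)) ∂μ
        = (f - vbar) ⬝ᵥ ((Matrix.of fun i j => ∫ ω, M ω i j ∂μ) *ᵥ (f - vbar)) + c := by
  classical
  set A : Matrix (Fin n) (Fin n) ℝ := Matrix.of fun i j => ∫ ω, M ω i j ∂μ with hA
  set b : Fin n → ℝ := fun i => ∫ ω, (M ω *ᵥ v ω) i ∂μ with hbdef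
  have hsym : ∀ ω, (M ω)ᵀ = M ω := by
    intro ω
    have h := (hpsd ω).1
    rwa [Matrix.IsHermitian, conjTranspose_eq_transpose_of_trivial] at h
  -- expansion of quadratic forms as double sums
  have hexp : ∀ (N : Matrix (Fin n) (Fin n) ℝ) (x y : Fin n → ℝ),
      x ⬝ᵥ (N *ᵥ y) = ∑ i, ∑ j, x i * (N i j * y j) := by
    intro N x y
    simp [dotProduct, mulVec, Finset.mul_sum]
  -- integrability of the quadratic form with constant vectors
  have hIntxy : ∀ x y : Fin n → ℝ, Integrable (fun ω => x ⬝ᵥ (M ω *ᵥ y)) μ := by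
    intro x y
    simp only [hexp]
    refine integrable_finset_sum _ fun i _ => integrable_finset_sum _ fun j _ => ?_
    simpa [mul_assoc] using ((hM i j).const_mul (x i)).mul_const (y j)
  -- integral of the quadratic form with constant vectors
  have hxy : ∀ x y : Fin n → ℝ, ∫ ω, x ⬝ᵥ (M ω *ᵥ y) ∂μ = x ⬝ᵥ (A *ᵥ y) := by
    intro x y
    simp only [hexp]
    rw [integral_finset_sum _ fun i _ => integrable_finset_sum _ fun j _ => (by
      simpa [mul_assoc] using ((hM i j).const_mul (x i)).mul_const (y j) :
        Integrable (fun ω => x i * (M ω i j * y j)) μ)]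
    refine Finset.sum_congr rfl fun i _ => ?_
    rw [integral_finset_sum _ fun j _ => (by
      simpa [mul_assoc] using ((hM i j).const_mul (x i)).mul_const (y j) :
        Integrable (fun ω => x i * (M ω i j * y j)) μ)]
    refine Finset.sum_congr rfl fun j _ => ?_
    rw [integral_const_mul, integral_mul_const]
    simp [hA, mul_assoc]
  -- integrability and integral of x ⬝ᵥ (M ω *ᵥ v ω)
  have hIntxb : ∀ x : Fin n → ℝ, Integrable (fun ω => x ⬝ᵥ (M ω *ᵥ v ω)) μ := by
    intro x
    have : (fun ω => x ⬝ᵥ (M ω *ᵥ v ω)) = fun ω => ∑ i, x i * (M ω *ᵥ v ω) i := by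
      funext ω; simp [dotProduct]
    rw [this]
    exact integrable_finset_sum _ fun i _ => (hMv i).const_mul (x i)
  have hxb : ∀ x : Fin n → ℝ, ∫ ω, x ⬝ᵥ (M ω *ᵥ v ω) ∂μ = x ⬝ᵥ b := by
    intro x
    have h1 : (fun ω => x ⬝ᵥ (M ω *ᵥ v ω)) = fun ω => ∑ i, x i * (M ω *ᵥ v ω) i := by
      funext ω; simp [dotProduct]
    rw [h1, integral_finset_sum _ fun i _ => (hMv i).const_mul (x i)]
    simp only [integral_const_mul]
    simp [dotProduct, hbdef]
  -- A is positive semidefinite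
  have hApsd : A.PosSemidef := by
    refine Matrix.PosSemidef.of_dotProduct_mulVec_nonneg ?_ ?_
    · rw [Matrix.IsHermitian, conjTranspose_eq_transpose_of_trivial]
      ext i j
      simp only [hA, transpose_apply, Matrix.of_apply]
      congr 1
      funext ω
      exact congrFun (congrFun (hsym ω) i) j
    · intro x
      have hstar : star x = x := by simp
      rw [hstar, ← hxy x x]
      exact integral_nonneg fun ω => by
        have := (hpsd ω).dotProduct_mulVec_nonneg x
        simpa using this
  -- b is orthogonal to the kernel of A
  have hbk : ∀ x : Fin n → ℝ, A *ᵥ x = 0 → b ⬝ᵥ x = 0 := by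
    intro x hx
    have h0 : ∫ ω, x ⬝ᵥ (M ω *ᵥ x) ∂μ = 0 := by
      rw [hxy x x, hx, dotProduct_zero]
    have hnn : 0 ≤ᵐ[μ] fun ω => x ⬝ᵥ (M ω *ᵥ x) := by
      filter_upwards with ω
      have := (hpsd ω).dotProduct_mulVec_nonneg x
      simpa using this
    have hae : (fun ω => x ⬝ᵥ (M ω *ᵥ x)) =ᵐ[μ] 0 :=
      ((integral_eq_zero_iff_of_nonneg_ae hnn (hIntxy x x)).mp h0)
    have hMx : ∀ᵐ ω ∂μ, M ω *ᵥ x = 0 := by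
      filter_upwards [hae] with ω hω
      have : star x ⬝ᵥ (M ω *ᵥ x) = 0 := by simpa using hω
      exact ((hpsd ω).dotProduct_mulVec_zero_iff x).mp this
    have hint0 : ∫ ω, x ⬝ᵥ (M ω *ᵥ v ω) ∂μ = 0 := by
      rw [integral_congr_ae (g := fun _ => (0 : ℝ)) ?_, integral_const]
      · simp
      · filter_upwards [hMx] with ω hω
        have : x ⬝ᵥ (M ω *ᵥ v ω) = (M ω *ᵥ x) ⬝ᵥ v ω := by
          rw [dotProduct_mulVec, ← mulVec_transpose, hsym ω]
        rw [this, hω, zero_dotProduct]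
    rw [dotProduct_comm, ← hxb x]
    exact hint0
  obtain ⟨vbar, hvbar⟩ := psd_exists_solution A hApsd b hbk
  refine ⟨vbar, (∫ ω, v ω ⬝ᵥ (M ω *ᵥ v ω) ∂μ) - vbar ⬝ᵥ (A *ᵥ vbar), fun f => ?_⟩
  -- pointwise expansion
  have hpt : ∀ ω, (f - v ω) ⬝ᵥ (M ω *ᵥ (f - v ω))
      = f ⬝ᵥ (M ω *ᵥ f) - 2 * (f ⬝ᵥ (M ω *ᵥ v ω)) + v ω ⬝ᵥ (M ω *ᵥ v ω) := by
    intro ω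
    have hswap : v ω ⬝ᵥ (M ω *ᵥ f) = f ⬝ᵥ (M ω *ᵥ v ω) := by
      rw [dotProduct_mulVec, ← mulVec_transpose, hsym ω, dotProduct_comm]
    rw [mulVec_sub, dotProduct_sub, sub_dotProduct, sub_dotProduct, hswap]
    ring
  have hLHS : ∫ ω, (f - v ω) ⬝ᵥ (M ω *ᵥ (f - v ω)) ∂μ
      = f ⬝ᵥ (A *ᵥ f) - 2 * (f ⬝ᵥ b) + ∫ ω, v ω ⬝ᵥ (M ω *ᵥ v ω) ∂μ := by
    simp only [hpt]
    have h2 : Integrable (fun ω => 2 * (f ⬝ᵥ (M ω *ᵥ v ω))) μ := (hIntxb f).const_mul 2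
    have h1 : Integrable (fun ω => f ⬝ᵥ (M ω *ᵥ f) - 2 * (f ⬝ᵥ (M ω *ᵥ v ω))) μ :=
      (hIntxy f f).sub h2
    rw [integral_add h1 hvMv, integral_sub (hIntxy f f) h2, integral_const_mul, hxy f f, hxb f]
  rw [hLHS]
  -- algebraic identity on the RHS
  have hAT : Aᵀ = A := by
    have h := hApsd.1
    rwa [Matrix.IsHermitian, conjTranspose_eq_transpose_of_trivial] at h
  have hsymA : vbar ⬝ᵥ (A *ᵥ f) = f ⬝ᵥ (A *ᵥ vbar) := by
    rw [dotProduct_mulVec, ← mulVec_transpose, hAT, dotProduct_comm]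
  have hAvb : A *ᵥ vbar = b := hvbar
  rw [mulVec_sub, dotProduct_sub, sub_dotProduct, sub_dotProduct, hsymA, hAvb]
  ring
end

section
/- Let Ω be a random real symmetric positive semidefinite n×n matrix and v a random vector in ℝⁿ, defined on a common probability space, such that Ω and Ωv are integrable. Then the vector E[Ωv] lies in the column space (range) of the matrix E[Ω]. -/
open MeasureTheory Matrix Module

lemma symm_exists_mulVec {n : ℕ} (A : Matrix (Fin n) (Fin n) ℝ) (hA : Aᵀ = A)
    (y : Fin n → ℝ) (h : ∀ x, A *ᵥ x = 0 → y ⬝ᵥ x = 0) :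
    ∃ x, A *ᵥ x = y := by
  classical
  have key : ∀ u w : Fin n → ℝ, (A *ᵥ u) ⬝ᵥ w = u ⬝ᵥ (A *ᵥ w) := by
    intro u w
    rw [dotProduct_comm, dotProduct_mulVec, ← hA, Matrix.vecMul_transpose, dotProduct_comm, hA]
  set T : EuclideanSpace ℝ (Fin n) →ₗ[ℝ] EuclideanSpace ℝ (Fin n) := Matrix.toEuclideanLin A
  have hT : ∀ z : EuclideanSpace ℝ (Fin n),
      T z = (WithLp.equiv 2 _).symm (A *ᵥ (WithLp.equiv 2 _) z) :=
    fun z => Matrix.toEuclideanLin_apply A z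
  have hinner : ∀ a b : EuclideanSpace ℝ (Fin n),
      (inner ℝ a b : ℝ) = (WithLp.equiv 2 _) a ⬝ᵥ (WithLp.equiv 2 _) b := by
    intro a b
    simp [PiLp.inner_apply, RCLike.inner_apply, dotProduct, mul_comm]
  have hsymm : ∀ a b : EuclideanSpace ℝ (Fin n), (inner ℝ (T a) b : ℝ) = inner ℝ a (T b) := by
    intro a b
    rw [hinner, hinner, hT, hT]
    simp only [Equiv.apply_symm_apply]
    exact key _ _
  have hle : LinearMap.range T ≤ (LinearMap.ker T)ᗮ := by
    rintro _ ⟨a, rfl⟩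
    rw [Submodule.mem_orthogonal]
    intro w hw
    rw [← hsymm, LinearMap.mem_ker.mp hw, inner_zero_left]
  have hfin : finrank ℝ (LinearMap.range T) = finrank ℝ ((LinearMap.ker T)ᗮ) := by
    have h1 := LinearMap.finrank_range_add_finrank_ker T
    have h2 := Submodule.finrank_add_finrank_orthogonal (LinearMap.ker T)
    have h3 : finrank ℝ (EuclideanSpace ℝ (Fin n)) = n := by simp
    omega
  have heq : LinearMap.range T = (LinearMap.ker T)ᗮ :=
    Submodule.eq_of_le_of_finrank_eq hle hfin
  set y' : EuclideanSpace ℝ (Fin n) := (WithLp.equiv 2 _).symm y with hy'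
  have hy'mem : y' ∈ (LinearMap.ker T)ᗮ := by
    rw [Submodule.mem_orthogonal]
    intro u hu
    have hAu : A *ᵥ (WithLp.equiv 2 _) u = 0 := by
      have := LinearMap.mem_ker.mp hu
      rw [hT] at this
      simpa using congrArg (WithLp.equiv 2 (Fin n → ℝ)) this
    rw [hinner, hy']
    simp only [Equiv.apply_symm_apply]
    rw [dotProduct_comm]
    exact h _ hAu
  rw [← heq] at hy'mem
  obtain ⟨x, hx⟩ := hy'mem
  refine ⟨(WithLp.equiv 2 _) x, ?_⟩
  rw [hT] at hx
  simpa [hy'] using congrArg (WithLp.equiv 2 (Fin n → ℝ)) hx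

/-- For a random symmetric PSD matrix `M` and random vector `v` with `M` and
`M *ᵥ v` integrable, the vector `E[M v]` lies in the column space (range) of `E[M]`. -/
theorem expectation_mulVec_mem_range_expectation
    {α : Type*} [MeasurableSpace α] (μ : Measure α) [IsProbabilityMeasure μ]
    (n : ℕ) (hn : 0 < n)
    (M : α → Matrix (Fin n) (Fin n) ℝ) (v : α → Fin n → ℝ)
    (hpsd : ∀ ω, (M ω).PosSemidef)
    (hM : ∀ i j, Integrable (fun ω => M ω i j) μ)
    (hMv : ∀ i, Integrable (fun ω => (M ω *ᵥ v ω) i) μ) :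
    ∃ x : Fin n → ℝ,
      (Matrix.of fun i j => ∫ ω, M ω i j ∂μ) *ᵥ x
        = fun i => ∫ ω, (M ω *ᵥ v ω) i ∂μ := by
  classical
  set A : Matrix (Fin n) (Fin n) ℝ := Matrix.of fun i j => ∫ ω, M ω i j ∂μ with hAdef
  set y : Fin n → ℝ := fun i => ∫ ω, (M ω *ᵥ v ω) i ∂μ with hydef
  have hMsymm : ∀ ω i j, M ω i j = M ω j i := by
    intro ω i j
    have := (hpsd ω).1
    rw [Matrix.IsHermitian] at this
    conv_rhs => rw [← this]
    simp [Matrix.conjTranspose_apply]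
  have hAsymm : Aᵀ = A := by
    ext i j
    simp only [Matrix.transpose_apply, hAdef, Matrix.of_apply]
    exact integral_congr_ae (Filter.Eventually.of_forall fun ω => hMsymm ω j i)
  -- integrability of components of M ω *ᵥ z for fixed z
  have hintMz : ∀ (z : Fin n → ℝ) (i), Integrable (fun ω => (M ω *ᵥ z) i) μ := by
    intro z i
    simp only [Matrix.mulVec, dotProduct]
    exact integrable_finset_sum _ fun j _ => (hM i j).mul_const _
  have hAmul : ∀ (z : Fin n → ℝ) (i), (A *ᵥ z) i = ∫ ω, (M ω *ᵥ z) i ∂μ := by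
    intro z i
    simp only [Matrix.mulVec, dotProduct, hAdef, Matrix.of_apply]
    rw [integral_finset_sum _ fun j _ => (hM i j).mul_const (z j)]
    congr 1
    funext j
    exact (integral_mul_const (z j) _).symm
  have h : ∀ x, A *ᵥ x = 0 → y ⬝ᵥ x = 0 := by
    intro x hx
    -- quadratic form integral is zero
    have hq : ∫ ω, x ⬝ᵥ (M ω *ᵥ x) ∂μ = 0 := by
      have : ∀ ω, x ⬝ᵥ (M ω *ᵥ x) = ∑ i, x i * (M ω *ᵥ x) i := fun ω => rfl
      calc ∫ ω, x ⬝ᵥ (M ω *ᵥ x) ∂μ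
          = ∑ i, ∫ ω, x i * (M ω *ᵥ x) i ∂μ := by
            simp_rw [this]
            exact integral_finset_sum _ fun i _ => (hintMz x i).const_mul _
        _ = ∑ i, x i * (A *ᵥ x) i := by
            refine Finset.sum_congr rfl fun i _ => ?_
            rw [integral_const_mul, hAmul]
        _ = 0 := by simp [hx]
    have hnonneg : 0 ≤ᵐ[μ] fun ω => x ⬝ᵥ (M ω *ᵥ x) := by
      refine Filter.Eventually.of_forall fun ω => ?_
      simpa using (hpsd ω).dotProduct_mulVec_nonneg x
    have hintq : Integrable (fun ω => x ⬝ᵥ (M ω *ᵥ x)) μ := by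
      have : (fun ω => x ⬝ᵥ (M ω *ᵥ x)) = fun ω => ∑ i, x i * (M ω *ᵥ x) i := rfl
      rw [this]
      exact integrable_finset_sum _ fun i _ => (hintMz x i).const_mul _
    have hae : (fun ω => x ⬝ᵥ (M ω *ᵥ x)) =ᵐ[μ] 0 :=
      (integral_eq_zero_iff_of_nonneg_ae hnonneg hintq).mp hq
    have haeMx : ∀ᵐ ω ∂μ, M ω *ᵥ x = 0 := by
      filter_upwards [hae] with ω hω
      have : star x ⬝ᵥ (M ω *ᵥ x) = 0 := by simpa using hω
      exact ((hpsd ω).dotProduct_mulVec_zero_iff x).mp this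
    -- conclude
    have hyx : y ⬝ᵥ x = ∫ ω, (M ω *ᵥ v ω) ⬝ᵥ x ∂μ := by
      have : ∀ ω, (M ω *ᵥ v ω) ⬝ᵥ x = ∑ i, (M ω *ᵥ v ω) i * x i := fun ω => rfl
      simp_rw [this]
      rw [integral_finset_sum _ fun i _ => (hMv i).mul_const _]
      refine Finset.sum_congr rfl fun i _ => ?_
      rw [integral_mul_const]
    rw [hyx]
    have : ∀ᵐ ω ∂μ, (M ω *ᵥ v ω) ⬝ᵥ x = 0 := by
      filter_upwards [haeMx] with ω hω
      rw [dotProduct_comm, Matrix.dotProduct_mulVec]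
      have : x ᵥ* M ω = 0 := by
        have h2 : x ᵥ* (M ω)ᵀ = M ω *ᵥ x := Matrix.vecMul_transpose _ _
        have h3 : (M ω)ᵀ = M ω := by
          ext i j; exact hMsymm ω j i
        rw [← h3, h2, hω]
      rw [this, zero_dotProduct]
    calc ∫ ω, (M ω *ᵥ v ω) ⬝ᵥ x ∂μ = ∫ _ω, (0 : ℝ) ∂μ := integral_congr_ae this
      _ = 0 := integral_zero _ _
  obtain ⟨x, hx⟩ := symm_exists_mulVec A hAsymm y h
  exact ⟨x, hx⟩
end

section
/- Let x be a square-integrable random vector in ℝⁿ and set S = E[x xᵀ]. Then x lies in the column space (range) of S almost surely. -/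
open MeasureTheory Matrix

/-! For every `v`, `E[(v ⬝ᵥ x)²] = v ⬝ᵥ S v`, so each `v ∈ ker S` is almost surely orthogonal to `x`.
Since `ker S` is finitely generated, almost surely `x ⊥ ker S`, and for the symmetric matrix `S`
that orthogonal complement is exactly the range of `S`. -/

theorem Submodule.FG.eventually_forall_apply_eq_zero {α R M N : Type*} [Semiring R] [AddCommMonoid M]
    [Module R M] [AddCommMonoid N] [Module R N] {l : Filter α} {K : Submodule R M} (hK : K.FG)
    {f : α → M →ₗ[R] N} (h : ∀ v ∈ K, ∀ᶠ a in l, f a v = 0) :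
    ∀ᶠ a in l, ∀ v ∈ K, f a v = 0 := by
  obtain ⟨s, rfl⟩ := hK
  have hs : ∀ᶠ a in l, ∀ v ∈ s, f a v = 0 :=
    (Filter.eventually_all_finset s).2 fun v hv => h v (Submodule.subset_span hv)
  filter_upwards [hs] with a ha v hv
  exact (Submodule.span_le (p := LinearMap.ker (f a))).2 ha hv

theorem Matrix.IsHermitian.exists_mulVec_eq {𝕜 ι : Type*} [RCLike 𝕜] [Fintype ι] [DecidableEq ι]
    {A : Matrix ι ι 𝕜} (hA : A.IsHermitian) {y : ι → 𝕜}
    (hy : ∀ v, A *ᵥ v = 0 → y ⬝ᵥ star v = 0) : ∃ z, A *ᵥ z = y := by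
  have hT := isSymmetric_toEuclideanLin_iff.mpr hA
  have hrange : LinearMap.range A.toEuclideanLin = (LinearMap.ker A.toEuclideanLin)ᗮ := by
    rw [← hT.orthogonal_range, Submodule.orthogonal_orthogonal]
  have hy' : WithLp.toLp 2 y ∈ LinearMap.range A.toEuclideanLin := by
    rw [hrange, Submodule.mem_orthogonal]
    intro u hu
    exact hy _ (congrArg WithLp.ofLp hu)
  obtain ⟨z, hz⟩ := hy'
  exact ⟨WithLp.ofLp z, congrArg WithLp.ofLp hz⟩

section SecondMoment

variable {α ι : Type*} [MeasurableSpace α] (μ : Measure α) (x : α → ι → ℝ)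

noncomputable def secondMoment : Matrix ι ι ℝ := Matrix.of fun i j => ∫ ω, x ω i * x ω j ∂μ

theorem isHermitian_secondMoment : (secondMoment μ x).IsHermitian := by
  ext i j
  simp [secondMoment, mul_comm]

variable {μ x} [Fintype ι]

theorem dotProduct_secondMoment_mulVec (hx : ∀ i, MemLp (fun ω => x ω i) 2 μ) (v : ι → ℝ) :
    v ⬝ᵥ (secondMoment μ x *ᵥ v) = ∫ ω, (v ⬝ᵥ x ω) ^ 2 ∂μ := by
  have hint : ∀ i j, Integrable (fun ω => x ω i * x ω j) μ := fun i j =>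
    (hx i).integrable_mul (hx j)
  calc v ⬝ᵥ (secondMoment μ x *ᵥ v)
      = ∑ i, ∑ j, ∫ ω, v i * v j * (x ω i * x ω j) ∂μ := by
        simp only [dotProduct, mulVec, secondMoment, of_apply, Finset.mul_sum, integral_const_mul]
        refine Finset.sum_congr rfl fun i _ => Finset.sum_congr rfl fun j _ => ?_
        ring
    _ = ∫ ω, ∑ i, ∑ j, v i * v j * (x ω i * x ω j) ∂μ := by
        rw [integral_finsetSum _ fun i _ => integrable_finsetSum _ fun j _ =>
          (hint i j).const_mul _]
        exact Finset.sum_congr rfl fun i _ =>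
          (integral_finsetSum _ fun j _ => (hint i j).const_mul _).symm
    _ = ∫ ω, (v ⬝ᵥ x ω) ^ 2 ∂μ := by
        congr with ω
        rw [sq, dotProduct, Finset.sum_mul_sum]
        exact Finset.sum_congr rfl fun i _ => Finset.sum_congr rfl fun j _ => by ring

theorem ae_dotProduct_eq_zero_of_secondMoment_mulVec_eq_zero
    (hx : ∀ i, MemLp (fun ω => x ω i) 2 μ) {v : ι → ℝ} (hv : secondMoment μ x *ᵥ v = 0) :
    ∀ᵐ ω ∂μ, v ⬝ᵥ x ω = 0 := by
  have hvx : MemLp (fun ω => v ⬝ᵥ x ω) 2 μ :=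
    memLp_finsetSum _ fun i _ => (hx i).const_mul (v i)
  have hsq : ∫ ω, (v ⬝ᵥ x ω) ^ 2 ∂μ = 0 := by
    rw [← dotProduct_secondMoment_mulVec hx, hv, dotProduct_zero]
  filter_upwards [(integral_eq_zero_iff_of_nonneg (fun ω => sq_nonneg _) hvx.integrable_sq).1 hsq]
    with ω hω
  exact pow_eq_zero_iff two_ne_zero |>.1 hω

end SecondMoment

theorem ae_mem_range_secondMoment_general
    {α : Type*} [MeasurableSpace α] (μ : Measure α)
    (n : ℕ) (x : α → Fin n → ℝ)
    (hx : ∀ i, MemLp (fun ω => x ω i) 2 μ) :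
    ∀ᵐ ω ∂μ, ∃ y : Fin n → ℝ,
      (Matrix.of fun i j => ∫ ω', x ω' i * x ω' j ∂μ) *ᵥ y = x ω := by
  have hker : ∀ᵐ ω ∂μ, ∀ v ∈ LinearMap.ker (secondMoment μ x).mulVecLin,
      dotProductBilin ℝ ℝ (x ω) v = 0 :=
    (IsNoetherian.noetherian _).eventually_forall_apply_eq_zero fun v hv =>
      (ae_dotProduct_eq_zero_of_secondMoment_mulVec_eq_zero hx hv).mono fun ω h =>
        (dotProduct_comm _ _).trans h
  filter_upwards [hker] with ω hω
  exact (isHermitian_secondMoment μ x).exists_mulVec_eq fun v hv => by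
    simpa using hω v hv

/-- A square-integrable random vector `x` lies, almost surely, in the column
space (range) of its second-moment matrix `S = E[x xᵀ]`. -/
theorem ae_mem_range_secondMoment
    {α : Type*} [MeasurableSpace α] (μ : Measure α) [IsProbabilityMeasure μ]
    (n : ℕ) (x : α → Fin n → ℝ)
    (hx : ∀ i, MemLp (fun ω => x ω i) 2 μ) :
    ∀ᵐ ω ∂μ, ∃ y : Fin n → ℝ,
      (Matrix.of fun i j => ∫ ω', x ω' i * x ω' j ∂μ) *ᵥ y = x ω :=
  ae_mem_range_secondMoment_general μ n x hx
end

section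
/- (Optimal explainer for different prediction targets.) Let ū and w̄ be square-integrable random vectors in ℝⁿ, let Ω be a fixed real symmetric positive definite n×n matrix, let 1 ≤ k ≤ n, and set S = E[(ū − w̄)(ū − w̄)ᵀ]. Let P ∈ ℝ^{k×n} be any matrix of full row rank k whose row space contains the column space of S. Then the explainer E = P Ω achieves the first best: almost surely, the unique minimizer of f ↦ (f − ū)ᵀ Ω (f − ū) over {f ∈ ℝⁿ : P Ω f = P Ω w̄} is f = w̄. That is, an explainer built from the directions of disagreement between agent and principal (the column space of the second-moment matrix of ū − w̄) fully aligns the agent's choice with the principal's bliss point. -/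
/-!
Write `d = ū − w̄` and `S = E[d dᵀ]`. For every `q` with `qᵀS = 0` we get `E[(q ⬝ d)²] = qᵀSq = 0`,
so `q ⬝ d = 0` almost surely; as `ker Sᵀ` is spanned by finitely many vectors, almost surely `d` is
orthogonal to all of it, i.e. `d ∈ range S ⊆ range Pᵀ`. For any `f ≠ w̄` with `PΩf = PΩw̄` the
cross term `(f − w̄)ᵀΩ(w̄ − ū) = -(PΩ(f − w̄))ᵀc`, where `ū − w̄ = Pᵀc`, then vanishes, and the loss at `f` exceeds the loss
at `w̄` by `(f − w̄)ᵀΩ(f − w̄) > 0`.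
-/

open MeasureTheory Matrix

theorem Matrix.mem_range_mulVecLin_iff {K m n : Type*} [Field K] [Fintype m] [Fintype n]
    (A : Matrix m n K) (v : m → K) :
    v ∈ LinearMap.range A.mulVecLin ↔ ∀ q, q ᵥ* A = 0 → q ⬝ᵥ v = 0 := by
  classical
  rw [← Subspace.forall_mem_dualAnnihilator_apply_eq_zero_iff,
    ← (dotProductEquiv K m).toEquiv.forall_congr_right]
  simp only [LinearEquiv.coe_toEquiv, Submodule.mem_dualAnnihilator, LinearMap.mem_range,
    forall_exists_index, forall_apply_eq_imp_iff, mulVecLin_apply, dotProductEquiv_apply_apply,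
    dotProduct_mulVec, dotProduct_eq_zero_iff]

theorem Submodule.FG.eventually_le_ker {R M N ι : Type*} [Semiring R] [AddCommMonoid M]
    [Module R M] [AddCommMonoid N] [Module R N] {K : Submodule R M} (hK : K.FG)
    {l : Filter ι} {φ : ι → M →ₗ[R] N} (h : ∀ x ∈ K, ∀ᶠ i in l, φ i x = 0) :
    ∀ᶠ i in l, K ≤ LinearMap.ker (φ i) := by
  obtain ⟨t, rfl⟩ := hK
  filter_upwards [t.eventually_all.2 fun x hx => h x (subset_span hx)] with i hi
  exact span_le.2 hi

section SecondMoment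

variable {α n : Type*} [MeasurableSpace α] {μ : Measure α} [Fintype n]

noncomputable def secondMomentMatrix (μ : Measure α) (X : α → n → ℝ) : Matrix n n ℝ :=
  Matrix.of fun i j => ∫ ω, X ω i * X ω j ∂μ

theorem memLp_dotProduct {p : ENNReal} {X : α → n → ℝ} (hX : ∀ i, MemLp (X · i) p μ)
    (q : n → ℝ) : MemLp (fun ω => q ⬝ᵥ X ω) p μ := by
  simpa [dotProduct] using memLp_finsetSum Finset.univ fun i _ => (hX i).const_mul (q i)

theorem integral_dotProduct {F : α → n → ℝ} (hF : ∀ i, Integrable (F · i) μ) (q : n → ℝ) :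
    ∫ ω, q ⬝ᵥ F ω ∂μ = q ⬝ᵥ fun i => ∫ ω, F ω i ∂μ := by
  simp only [dotProduct]
  rw [integral_finsetSum _ fun i _ => (hF i).const_mul (q i)]
  simp only [integral_const_mul]

theorem dotProduct_secondMomentMatrix_mulVec {X : α → n → ℝ} (hX : ∀ i, MemLp (X · i) 2 μ)
    (q : n → ℝ) : q ⬝ᵥ (secondMomentMatrix μ X *ᵥ q) = ∫ ω, (q ⬝ᵥ X ω) ^ 2 ∂μ := by
  have hprod (i j) : Integrable (fun ω => X ω i * X ω j) μ := (hX i).integrable_mul (hX j)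
  have hmulVec : secondMomentMatrix μ X *ᵥ q = fun i => ∫ ω, X ω i * (q ⬝ᵥ X ω) ∂μ := by
    ext i
    simp only [← smul_eq_mul (X _ i), ← dotProduct_smul]
    rw [integral_dotProduct (F := fun ω => X ω i • X ω) (hprod i)]
    simp [mulVec, dotProduct, secondMomentMatrix, mul_comm]
  rw [hmulVec, ← integral_dotProduct (F := fun ω i => X ω i * (q ⬝ᵥ X ω))
    fun i => (hX i).integrable_mul (memLp_dotProduct hX q)]
  congr 1 with ω
  simp only [dotProduct, sq, Finset.sum_mul, mul_assoc]

theorem ae_dotProduct_eq_zero_of_vecMul_secondMomentMatrix_eq_zero {X : α → n → ℝ}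
    (hX : ∀ i, MemLp (X · i) 2 μ) {q : n → ℝ} (hq : q ᵥ* secondMomentMatrix μ X = 0) :
    ∀ᵐ ω ∂μ, q ⬝ᵥ X ω = 0 := by
  have hzero : ∫ ω, (q ⬝ᵥ X ω) ^ 2 ∂μ = 0 := by
    rw [← dotProduct_secondMomentMatrix_mulVec hX, dotProduct_mulVec, hq, zero_dotProduct]
  filter_upwards [(integral_eq_zero_iff_of_nonneg (fun ω => sq_nonneg _)
    (memLp_dotProduct hX q).integrable_sq).1 hzero] with ω hω
  exact pow_eq_zero_iff two_ne_zero |>.1 hω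

theorem ae_mem_range_secondMomentMatrix {X : α → n → ℝ} (hX : ∀ i, MemLp (X · i) 2 μ) :
    ∀ᵐ ω ∂μ, X ω ∈ LinearMap.range (secondMomentMatrix μ X).mulVecLin := by
  classical
  have hker := (IsNoetherian.noetherian
      (LinearMap.ker (secondMomentMatrix μ X).vecMulLinear)).eventually_le_ker
    (φ := fun ω => dotProductEquiv ℝ n (X ω)) fun q hq => by
      simpa [dotProduct_comm] using
        ae_dotProduct_eq_zero_of_vecMul_secondMomentMatrix_eq_zero hX hq
  filter_upwards [hker] with ω hω
  rw [mem_range_mulVecLin_iff]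
  intro q hq
  simpa [dotProduct_comm] using hω hq

end SecondMoment

namespace Matrix.PosDef

variable {n k : Type*} [Fintype n] [Fintype k] {Ω : Matrix n n ℝ}

theorem dotProduct_mulVec_lt_add (hΩ : Ω.PosDef) {v d : n → ℝ} (hv : v ≠ 0)
    (hvd : v ⬝ᵥ (Ω *ᵥ d) = 0) : d ⬝ᵥ (Ω *ᵥ d) < (v + d) ⬝ᵥ (Ω *ᵥ (v + d)) := by
  have hdv : d ⬝ᵥ (Ω *ᵥ v) = 0 := by
    rw [dotProduct_mulVec, ← mulVec_transpose, (isHermitian_iff_isSymm.1 hΩ.isHermitian).eq,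
      dotProduct_comm, hvd]
  have hpos : 0 < v ⬝ᵥ (Ω *ᵥ v) := by simpa using hΩ.dotProduct_mulVec_pos hv
  simp only [mulVec_add, add_dotProduct, dotProduct_add, hvd, hdv]
  linarith

theorem dotProduct_mulVec_sub_lt_of_mulVec_eq (hΩ : Ω.PosDef) (P : Matrix k n ℝ)
    {u w f : n → ℝ} (huw : u - w ∈ LinearMap.range Pᵀ.mulVecLin)
    (hf : (P * Ω) *ᵥ f = (P * Ω) *ᵥ w) (hfw : f ≠ w) :
    (w - u) ⬝ᵥ (Ω *ᵥ (w - u)) < (f - u) ⬝ᵥ (Ω *ᵥ (f - u)) := by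
  obtain ⟨c, hc⟩ := huw
  have hcross : (f - w) ⬝ᵥ (Ω *ᵥ (w - u)) = 0 := by
    have hΩP : Ω * Pᵀ = (P * Ω)ᵀ := by
      rw [transpose_mul, (isHermitian_iff_isSymm.1 hΩ.isHermitian).eq]
    rw [← neg_sub u w, ← hc, mulVecLin_apply, mulVec_neg, dotProduct_neg, mulVec_mulVec,
      dotProduct_mulVec, hΩP, vecMul_transpose, mulVec_sub, hf, sub_self, zero_dotProduct, neg_zero]
  simpa using hΩ.dotProduct_mulVec_lt_add (sub_ne_zero.2 hfw) hcross

end Matrix.PosDef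

theorem optimal_explainer_for_prediction_targets_general
    {α : Type*} [MeasurableSpace α] (μ : Measure α)
    (n k : ℕ)
    (ubar wbar : α → Fin n → ℝ)
    (hu : ∀ i, MemLp (fun ω => ubar ω i) 2 μ)
    (hw : ∀ i, MemLp (fun ω => wbar ω i) 2 μ)
    (Ω : Matrix (Fin n) (Fin n) ℝ) (hΩ : Ω.PosDef)
    (P : Matrix (Fin k) (Fin n) ℝ)
    (hrow : ∀ y : Fin n → ℝ,
      (∃ z : Fin n → ℝ,
        (Matrix.of fun i j =>
          ∫ ω, (ubar ω i - wbar ω i) * (ubar ω j - wbar ω j) ∂μ :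
          Matrix (Fin n) (Fin n) ℝ) *ᵥ z = y) →
      ∃ c : Fin k → ℝ, Pᵀ *ᵥ c = y) :
    ∀ᵐ ω ∂μ,
      ∀ f : Fin n → ℝ, (P * Ω) *ᵥ f = (P * Ω) *ᵥ wbar ω → f ≠ wbar ω →
        (wbar ω - ubar ω) ⬝ᵥ (Ω *ᵥ (wbar ω - ubar ω))
          < (f - ubar ω) ⬝ᵥ (Ω *ᵥ (f - ubar ω)) := by
  filter_upwards [ae_mem_range_secondMomentMatrix fun i => (hu i).sub (hw i)] with ω hω f hf hfw
  -- the matrix in `hrow` is `secondMomentMatrix μ (ubar - wbar)` unfolded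
  exact hΩ.dotProduct_mulVec_sub_lt_of_mulVec_eq P (hrow _ hω) hf hfw

/-- Optimal explainer for different prediction targets: if `P` has full row
rank `k` and its row space contains the column space of `S = E[(ū − w̄)(ū − w̄)ᵀ]`, then the
explainer `E = P Ω` achieves the first best: almost surely the unique minimizer of
`(f − ū)ᵀ Ω (f − ū)` over `{f : P Ω f = P Ω w̄}` is `f = w̄`. -/
theorem optimal_explainer_for_prediction_targets
    {α : Type*} [MeasurableSpace α] (μ : Measure α) [IsProbabilityMeasure μ]
    (n k : ℕ) (hk1 : 1 ≤ k) (hkn : k ≤ n)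
    (ubar wbar : α → Fin n → ℝ)
    (hu : ∀ i, MemLp (fun ω => ubar ω i) 2 μ)
    (hw : ∀ i, MemLp (fun ω => wbar ω i) 2 μ)
    (Ω : Matrix (Fin n) (Fin n) ℝ) (hΩ : Ω.PosDef)
    (P : Matrix (Fin k) (Fin n) ℝ) (hP : P.rank = k)
    (hrow : ∀ y : Fin n → ℝ,
      (∃ z : Fin n → ℝ,
        (Matrix.of fun i j =>
          ∫ ω, (ubar ω i - wbar ω i) * (ubar ω j - wbar ω j) ∂μ :
          Matrix (Fin n) (Fin n) ℝ) *ᵥ z = y) →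
      ∃ c : Fin k → ℝ, Pᵀ *ᵥ c = y) :
    ∀ᵐ ω ∂μ,
      ∀ f : Fin n → ℝ, (P * Ω) *ᵥ f = (P * Ω) *ᵥ wbar ω → f ≠ wbar ω →
        (wbar ω - ubar ω) ⬝ᵥ (Ω *ᵥ (wbar ω - ubar ω))
          < (f - ubar ω) ⬝ᵥ (Ω *ᵥ (f - ubar ω)) :=
  optimal_explainer_for_prediction_targets_general μ n k ubar wbar hu hw Ω hΩ P hrow
end

section
/- (Poincaré separation / Ky Fan trace bounds.) Let S be a real symmetric n×n matrix with eigenvalues λ↓₁(S) ≥ λ↓₂(S) ≥ … ≥ λ↓ₙ(S) counted with multiplicity, and let P ∈ ℝ^{r×n} satisfy P Pᵀ = I_r (orthonormal rows), with 1 ≤ r ≤ n. Then Σ_{i=n−r+1}^{n} λ↓ᵢ(S) ≤ trace(P S Pᵀ) ≤ Σ_{i=1}^{r} λ↓ᵢ(S). -/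
open Matrix Finset

lemma my_card_filter_lt (n r : ℕ) (h : r ≤ n) :
    (univ.filter fun i : Fin n => (i:ℕ) < r).card = r := by
  have : (univ.filter fun i : Fin n => (i:ℕ) < r) = (univ.map (Fin.castLEEmb h)) := by
    ext i
    simp only [mem_filter, mem_univ, true_and, mem_map, Fin.castLEEmb, Function.Embedding.coeFn_mk]
    constructor
    · intro hi; exact ⟨⟨i, hi⟩, Fin.ext rfl⟩
    · rintro ⟨j, rfl⟩; exact j.isLt
  rw [this, card_map, card_univ, Fintype.card_fin]

lemma my_card_filter_ge (n r : ℕ) (h : r ≤ n) :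
    (univ.filter fun i : Fin n => n - r ≤ (i:ℕ)).card = r := by
  have h2 := my_card_filter_lt n (n - r) (Nat.sub_le n r)
  have h3 := Finset.card_filter_add_card_filter_not
    (s := (univ : Finset (Fin n))) (p := fun i : Fin n => (i:ℕ) < n - r)
  have h4 : (univ.filter fun i : Fin n => ¬ (i:ℕ) < n - r)
      = (univ.filter fun i : Fin n => n - r ≤ (i:ℕ)) := by
    apply filter_congr; intro i _; simp [not_lt]
  rw [h4] at h3
  have h5 : (univ : Finset (Fin n)).card = n := by simp
  omega

lemma ky_fan_upper {n r : ℕ} (hr1 : 1 ≤ r) (hrn : r ≤ n)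
    (e d : Fin n → ℝ) (hmono : Antitone e)
    (hd0 : ∀ i, 0 ≤ d i) (hd1 : ∀ i, d i ≤ 1) (hsum : ∑ i, d i = (r : ℝ)) :
    ∑ i, e i * d i ≤ ∑ i ∈ univ.filter (fun i : Fin n => (i : ℕ) < r), e i := by
  have hrlt : r - 1 < n := by omega
  set t : ℝ := e ⟨r - 1, hrlt⟩ with ht
  have key : ∀ i : Fin n, (e i - t) * d i ≤ if (i:ℕ) < r then e i - t else 0 := by
    intro i
    split_ifs with hi
    · have hit : t ≤ e i := hmono (by simp [Fin.le_def]; omega)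
      calc (e i - t) * d i ≤ (e i - t) * 1 :=
            mul_le_mul_of_nonneg_left (hd1 i) (by linarith)
        _ = e i - t := mul_one _
    · have hit : e i ≤ t := hmono (by simp [Fin.le_def]; omega)
      exact mul_nonpos_of_nonpos_of_nonneg (by linarith) (hd0 i)
  have h1 : ∑ i, (e i - t) * d i ≤ ∑ i ∈ univ.filter (fun i : Fin n => (i:ℕ) < r), (e i - t) := by
    rw [Finset.sum_filter]
    exact Finset.sum_le_sum fun i _ => key i
  have h2 : ∑ i, (e i - t) * d i = ∑ i, e i * d i - t * r := by
    simp only [sub_mul, Finset.sum_sub_distrib, ← Finset.mul_sum, hsum]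
  have h3 : ∑ i ∈ univ.filter (fun i : Fin n => (i:ℕ) < r), (e i - t)
      = (∑ i ∈ univ.filter (fun i : Fin n => (i:ℕ) < r), e i) - t * r := by
    rw [Finset.sum_sub_distrib, Finset.sum_const, my_card_filter_lt n r hrn]
    ring
  linarith

lemma ky_fan_lower {n r : ℕ} (hr1 : 1 ≤ r) (hrn : r ≤ n)
    (e d : Fin n → ℝ) (hmono : Antitone e)
    (hd0 : ∀ i, 0 ≤ d i) (hd1 : ∀ i, d i ≤ 1) (hsum : ∑ i, d i = (r : ℝ)) :
    ∑ i ∈ univ.filter (fun i : Fin n => n - r ≤ (i : ℕ)), e i ≤ ∑ i, e i * d i := by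
  have hrlt : n - r < n := by omega
  set t : ℝ := e ⟨n - r, hrlt⟩ with ht
  have key : ∀ i : Fin n, (if n - r ≤ (i:ℕ) then e i - t else 0) ≤ (e i - t) * d i := by
    intro i
    split_ifs with hi
    · have hit : e i ≤ t := hmono (by simp [Fin.le_def]; omega)
      calc (e i - t) = (e i - t) * 1 := (mul_one _).symm
        _ ≤ (e i - t) * d i := mul_le_mul_of_nonpos_left (hd1 i) (by linarith)
    · have hit : t ≤ e i := hmono (by simp [Fin.le_def]; omega)
      exact mul_nonneg (by linarith) (hd0 i)
  have h1 : ∑ i ∈ univ.filter (fun i : Fin n => n - r ≤ (i:ℕ)), (e i - t)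
      ≤ ∑ i, (e i - t) * d i := by
    rw [Finset.sum_filter]
    exact Finset.sum_le_sum fun i _ => key i
  have h2 : ∑ i, (e i - t) * d i = ∑ i, e i * d i - t * r := by
    simp only [sub_mul, Finset.sum_sub_distrib, ← Finset.mul_sum, hsum]
  have h3 : ∑ i ∈ univ.filter (fun i : Fin n => n - r ≤ (i:ℕ)), (e i - t)
      = (∑ i ∈ univ.filter (fun i : Fin n => n - r ≤ (i:ℕ)), e i) - t * r := by
    rw [Finset.sum_sub_distrib, Finset.sum_const, my_card_filter_ge n r hrn]
    ring
  linarith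

/-- Poincaré separation / Ky Fan trace bounds: if `e` is the decreasing
rearrangement of the eigenvalues of the real symmetric matrix `S` and `P` has orthonormal
rows, then the sum of the `r` smallest eigenvalues bounds `trace(P S Pᵀ)` from below and
the sum of the `r` largest eigenvalues bounds it from above. -/
theorem poincare_separation_trace_bounds
    {n r : ℕ} (hr1 : 1 ≤ r) (hrn : r ≤ n)
    (S : Matrix (Fin n) (Fin n) ℝ) (hS : S.IsHermitian)
    (e : Fin n → ℝ) (hmono : Antitone e)
    (σ : Equiv.Perm (Fin n)) (he : e = hS.eigenvalues ∘ σ)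
    (P : Matrix (Fin r) (Fin n) ℝ) (hP : P * Pᵀ = 1) :
    (∑ i ∈ univ.filter (fun i : Fin n => n - r ≤ (i : ℕ)), e i) ≤ (P * S * Pᵀ).trace ∧
      (P * S * Pᵀ).trace ≤ ∑ i ∈ univ.filter (fun i : Fin n => (i : ℕ) < r), e i := by
  set U : Matrix (Fin n) (Fin n) ℝ := (hS.eigenvectorUnitary : Matrix (Fin n) (Fin n) ℝ) with hU
  have hstar : star U = Uᵀ := by
    rw [Matrix.star_eq_conjTranspose, Matrix.conjTranspose_eq_transpose_of_trivial]
  have hUU : U * Uᵀ = 1 := by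
    rw [← hstar]; exact (Matrix.mem_unitaryGroup_iff).mp hS.eigenvectorUnitary.2
  have hspec : S = U * Matrix.diagonal hS.eigenvalues * Uᵀ := by
    conv_lhs => rw [hS.spectral_theorem]
    rw [Unitary.conjStarAlgAut_apply, ← hU, hstar, RCLike.ofReal_real_eq_id]
    rfl
  set Q : Matrix (Fin r) (Fin n) ℝ := P * U with hQ
  have hQQ : Q * Qᵀ = 1 := by
    simp only [hQ, Matrix.transpose_mul, Matrix.mul_assoc]
    rw [← Matrix.mul_assoc U, hUU, Matrix.one_mul, hP]
  have hPSP : P * S * Pᵀ = Q * Matrix.diagonal hS.eigenvalues * Qᵀ := by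
    simp only [hspec, hQ, Matrix.transpose_mul, Matrix.mul_assoc]
  set M : Matrix (Fin n) (Fin n) ℝ := Qᵀ * Q with hM
  set c : Fin n → ℝ := fun j => M j j with hc
  have hMsymm : Mᵀ = M := by
    rw [hM, Matrix.transpose_mul, Matrix.transpose_transpose]
  have hMM : M * M = M := by
    rw [hM, Matrix.mul_assoc, ← Matrix.mul_assoc Q, hQQ, Matrix.one_mul]
  -- trace = Σ_j eigenvalue j * c j
  have htrace : (P * S * Pᵀ).trace = ∑ j, hS.eigenvalues j * c j := by
    rw [hPSP, Matrix.trace_mul_cycle]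
    simp only [Matrix.trace, Matrix.diag, Matrix.mul_diagonal, hc, hM]
    exact Finset.sum_congr rfl fun j _ => mul_comm _ _
  have hc0 : ∀ j, 0 ≤ c j := by
    intro j
    simp only [hc, hM, Matrix.mul_apply, Matrix.transpose_apply]
    exact Finset.sum_nonneg fun i _ => mul_self_nonneg _
  have hc1 : ∀ j, c j ≤ 1 := by
    intro j
    have hEq : (M * M) j j = M j j := congrFun (congrFun hMM j) j
    rw [Matrix.mul_apply] at hEq
    have hsq : ∀ k, M j k * M k j = (M j k) ^ 2 := by
      intro k
      have : M k j = M j k := by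
        conv_lhs => rw [← hMsymm, Matrix.transpose_apply]
      rw [this]; ring
    have hge : M j j ^ 2 ≤ ∑ k, M j k * M k j := by
      calc M j j ^ 2 = M j j * M j j := sq (M j j) ▸ by ring
        _ ≤ ∑ k, M j k * M k j := by
            apply Finset.single_le_sum (f := fun k => M j k * M k j)
            · intro k _; rw [hsq k]; positivity
            · exact Finset.mem_univ j
    have : c j ^ 2 ≤ c j := by rw [hc]; dsimp only; nlinarith [hEq, hge]
    nlinarith [hc0 j, this]
  have hcsum : ∑ j, c j = (r : ℝ) := by
    have : ∑ j, c j = M.trace := by simp [Matrix.trace, Matrix.diag, hc]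
    rw [this, hM, Matrix.trace_mul_comm, hQQ, Matrix.trace_one]
    simp
  -- reindex by σ
  set d : Fin n → ℝ := fun i => c (σ i) with hd
  have hperm : ∑ j, hS.eigenvalues j * c j = ∑ i, e i * d i := by
    rw [he]
    exact (Equiv.sum_comp σ (fun j => hS.eigenvalues j * c j)).symm
  have hdsum : ∑ i, d i = (r : ℝ) := by
    rw [hd, ← hcsum]
    exact Equiv.sum_comp σ c
  have hd0 : ∀ i, 0 ≤ d i := fun i => hc0 (σ i)
  have hd1 : ∀ i, d i ≤ 1 := fun i => hc1 (σ i)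
  rw [htrace, hperm]
  exact ⟨ky_fan_lower hr1 hrn e d hmono hd0 hd1 hdsum,
         ky_fan_upper hr1 hrn e d hmono hd0 hd1 hdsum⟩
end

section
/- Let S₁ and S₂ be real symmetric positive semidefinite n×n matrices, let 0 ≤ k ≤ n − 1 and 0 ≤ m ≤ n − k, and suppose that λ↓ₙ(S₂) ≥ λ↓_{k+1}(S₁). Let P₀ ∈ ℝ^{(n−k−m)×n} and P₁ ∈ ℝ^{m×n} be matrices such that the stacked (n−k)×n matrix with P₀ on top of P₁ has orthonormal rows. Then trace(P₀ S₁ P₀ᵀ) + trace(P₁ S₂ P₁ᵀ) ≥ Σ_{i=k+1}^{n} λ↓ᵢ(S₁). -/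
open Matrix Finset

private lemma psd_diag_nonneg {N : ℕ} {M : Matrix (Fin N) (Fin N) ℝ} (hM : M.PosSemidef)
    (i : Fin N) : 0 ≤ M i i := by
  exact hM.diag_nonneg

private lemma card_filter_ge {N b : ℕ} (hb : b ≤ N) :
    (univ.filter (fun i : Fin N => b ≤ (i : ℕ))).card = N - b := by
  rcases eq_or_lt_of_le hb with rfl | hbN
  · have h0 : univ.filter (fun i : Fin b => b ≤ (i : ℕ)) = ∅ :=
      Finset.filter_eq_empty_iff.mpr fun i _ => Nat.not_le.mpr i.isLt
    simp [h0]
  · have hA : univ.filter (fun i : Fin N => b ≤ (i : ℕ)) = Finset.Ici (⟨b, hbN⟩ : Fin N) := by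
      ext i; simp [Finset.mem_Ici, Fin.le_def]
    rw [hA, Fin.card_Ici]

private lemma comb {N b : ℕ} (hb : b ≤ N) (e t : Fin N → ℝ) (hmono : Antitone e)
    (he : ∀ i, 0 ≤ e i) (ht0 : ∀ i, 0 ≤ t i) (ht1 : ∀ i, t i ≤ 1)
    (hsum : ∑ i, t i = ((N - b : ℕ) : ℝ)) :
    ∑ i ∈ univ.filter (fun i : Fin N => b ≤ (i : ℕ)), e i ≤ ∑ i, e i * t i := by
  rcases eq_or_lt_of_le hb with rfl | hbN
  · have h0 : univ.filter (fun i : Fin b => b ≤ (i : ℕ)) = ∅ :=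
      Finset.filter_eq_empty_iff.mpr fun i _ => Nat.not_le.mpr i.isLt
    rw [h0, Finset.sum_empty]
    exact Finset.sum_nonneg fun i _ => mul_nonneg (he i) (ht0 i)
  · set a : Fin N := ⟨b, hbN⟩ with ha
    set A := univ.filter (fun i : Fin N => b ≤ (i : ℕ)) with hAdef
    have hcard : A.card = N - b := card_filter_ge hb
    have hsplit : ∑ i, e i * t i
        = ∑ i ∈ A, e i * t i + ∑ i ∈ univ.filter (fun i : Fin N => ¬ b ≤ (i : ℕ)), e i * t i :=
      (Finset.sum_filter_add_sum_filter_not univ _ _).symm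
    have htsplit : ∑ i, t i
        = ∑ i ∈ A, t i + ∑ i ∈ univ.filter (fun i : Fin N => ¬ b ≤ (i : ℕ)), t i :=
      (Finset.sum_filter_add_sum_filter_not univ _ _).symm
    set s := ∑ i ∈ A, t i with hs
    have h1 : ∑ i ∈ A, e i * (1 - t i) ≤ e a * (((N - b : ℕ) : ℝ) - s) := by
      calc ∑ i ∈ A, e i * (1 - t i) ≤ ∑ i ∈ A, e a * (1 - t i) := by
            apply Finset.sum_le_sum; intro i hi
            have hia : a ≤ i := by
              rw [hAdef, Finset.mem_filter] at hi
              exact Fin.le_def.mpr hi.2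
            exact mul_le_mul_of_nonneg_right (hmono hia) (by linarith [ht1 i])
        _ = e a * (((N - b : ℕ) : ℝ) - s) := by
            rw [← Finset.mul_sum, Finset.sum_sub_distrib, Finset.sum_const, hcard,
              nsmul_eq_mul, mul_one]
    have h2 : e a * (((N - b : ℕ) : ℝ) - s)
        ≤ ∑ i ∈ univ.filter (fun i : Fin N => ¬ b ≤ (i : ℕ)), e i * t i := by
      have hcomp : ∑ i ∈ univ.filter (fun i : Fin N => ¬ b ≤ (i : ℕ)), t i
          = ((N - b : ℕ) : ℝ) - s := by
        rw [htsplit] at hsum; linarith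
      calc e a * (((N - b : ℕ) : ℝ) - s)
          = ∑ i ∈ univ.filter (fun i : Fin N => ¬ b ≤ (i : ℕ)), e a * t i := by
            rw [← Finset.mul_sum, hcomp]
        _ ≤ ∑ i ∈ univ.filter (fun i : Fin N => ¬ b ≤ (i : ℕ)), e i * t i := by
            apply Finset.sum_le_sum; intro i hi
            rw [Finset.mem_filter] at hi
            have hia : i ≤ a := Fin.le_def.mpr (le_of_lt (Nat.lt_of_not_le hi.2))
            exact mul_le_mul_of_nonneg_right (hmono hia) (ht0 i)
    have h3 : ∑ i ∈ A, e i = ∑ i ∈ A, e i * t i + ∑ i ∈ A, e i * (1 - t i) := by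
      rw [← Finset.sum_add_distrib]; exact Finset.sum_congr rfl fun i _ => by ring
    linarith

private lemma proj_facts {N r : ℕ} (S : Matrix (Fin N) (Fin N) ℝ) (hS : S.PosSemidef)
    (P : Matrix (Fin r) (Fin N) ℝ) (hP : P * Pᵀ = 1) :
    ∃ t : Fin N → ℝ, (∀ j, 0 ≤ t j) ∧ (∀ j, t j ≤ 1) ∧ (∑ j, t j = (r : ℝ)) ∧
      (P * S * Pᵀ).trace = ∑ j, hS.isHermitian.eigenvalues j * t j := by
  set U := (hS.isHermitian.eigenvectorUnitary : Matrix (Fin N) (Fin N) ℝ) with hUdef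
  have hUU : star U * U = 1 :=
    Matrix.mem_unitaryGroup_iff'.mp hS.isHermitian.eigenvectorUnitary.2
  have hUU' : U * star U = 1 :=
    Matrix.mem_unitaryGroup_iff.mp hS.isHermitian.eigenvectorUnitary.2
  have hQsd : (Pᵀ * P).PosSemidef := by
    have := posSemidef_conjTranspose_mul_self P
    rwa [conjTranspose_eq_transpose_of_trivial] at this
  have hQQ : (Pᵀ * P) * (Pᵀ * P) = Pᵀ * P := by
    rw [Matrix.mul_assoc, ← Matrix.mul_assoc P Pᵀ P, hP, Matrix.one_mul]
  have h1mQ : (1 - Pᵀ * P).PosSemidef := by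
    have key : (1 - Pᵀ * P)ᴴ * (1 - Pᵀ * P) = 1 - Pᵀ * P := by
      rw [conjTranspose_sub, conjTranspose_one, hQsd.1.eq, Matrix.sub_mul, Matrix.one_mul,
        Matrix.mul_sub, Matrix.mul_one, hQQ]
      abel
    exact key ▸ posSemidef_conjTranspose_mul_self (1 - Pᵀ * P)
  refine ⟨fun j => (star U * (Pᵀ * P) * U) j j, ?_, ?_, ?_, ?_⟩
  · intro j
    have : (star U * (Pᵀ * P) * U).PosSemidef := by
      have := hQsd.conjTranspose_mul_mul_same U
      rwa [← Matrix.star_eq_conjTranspose] at this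
    exact psd_diag_nonneg this j
  · intro j
    have hpsd : (star U * (1 - Pᵀ * P) * U).PosSemidef := by
      have := h1mQ.conjTranspose_mul_mul_same U
      rwa [← Matrix.star_eq_conjTranspose] at this
    have h0 := psd_diag_nonneg hpsd j
    have heq : star U * (1 - Pᵀ * P) * U = 1 - star U * (Pᵀ * P) * U := by
      rw [Matrix.mul_sub, Matrix.mul_one, Matrix.sub_mul, hUU]
    rw [heq, Matrix.sub_apply, Matrix.one_apply_eq] at h0
    linarith
  · have h : ∑ j, (star U * (Pᵀ * P) * U) j j = (star U * (Pᵀ * P) * U).trace := by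
      simp [Matrix.trace, Matrix.diag]
    rw [h, Matrix.trace_mul_cycle (star U) (Pᵀ * P) U, ← Matrix.mul_assoc, hUU',
      Matrix.one_mul, Matrix.trace_mul_comm, hP, Matrix.trace_one]
    simp
  · have htr : (P * S * Pᵀ).trace = (S * (Pᵀ * P)).trace := by
      rw [Matrix.trace_mul_cycle, Matrix.trace_mul_comm]
    rw [htr]
    calc (S * (Pᵀ * P)).trace
        = (U * diagonal (RCLike.ofReal ∘ hS.isHermitian.eigenvalues) * star U
            * (Pᵀ * P)).trace := by
          have hsp : S = U * diagonal (RCLike.ofReal ∘ hS.isHermitian.eigenvalues) * star U :=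
            hS.isHermitian.spectral_theorem
          conv_lhs => rw [hsp]
      _ = (diagonal (RCLike.ofReal ∘ hS.isHermitian.eigenvalues)
            * (star U * (Pᵀ * P) * U)).trace := by
          rw [Matrix.mul_assoc, Matrix.mul_assoc, Matrix.trace_mul_comm]
          simp only [Matrix.mul_assoc]
      _ = ∑ j, hS.isHermitian.eigenvalues j * ((star U * (Pᵀ * P) * U) j j) := by
          simp [Matrix.trace, Matrix.diag, Matrix.diagonal_mul, RCLike.ofReal_real_eq_id]

/-- for real symmetric PSD matrices `S₁, S₂` with decreasing eigenvalue
listings `e₁, e₂`, if `λ↓ₙ(S₂) ≥ λ↓_{k+1}(S₁)` and the stacked matrix of `P₀, P₁` has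
orthonormal rows, then `trace(P₀ S₁ P₀ᵀ) + trace(P₁ S₂ P₁ᵀ) ≥ Σ_{i=k+1}^{n} λ↓ᵢ(S₁)`. -/
theorem trace_sum_lower_bound_stacked
    {n k m : ℕ} (hn : 0 < n) (hk : k ≤ n - 1) (hm : m ≤ n - k)
    (S1 S2 : Matrix (Fin n) (Fin n) ℝ)
    (h1 : S1.PosSemidef) (h2 : S2.PosSemidef)
    (e1 e2 : Fin n → ℝ) (hmono1 : Antitone e1) (hmono2 : Antitone e2)
    (σ1 σ2 : Equiv.Perm (Fin n))
    (he1 : e1 = h1.isHermitian.eigenvalues ∘ σ1)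
    (he2 : e2 = h2.isHermitian.eigenvalues ∘ σ2)
    (hgap : e1 ⟨k, by omega⟩ ≤ e2 ⟨n - 1, by omega⟩)
    (P0 : Matrix (Fin (n - k - m)) (Fin n) ℝ) (P1 : Matrix (Fin m) (Fin n) ℝ)
    (hortho : Matrix.fromRows P0 P1 * (Matrix.fromRows P0 P1)ᵀ = 1) :
    (∑ i ∈ univ.filter (fun i : Fin n => k ≤ (i : ℕ)), e1 i)
      ≤ (P0 * S1 * P0ᵀ).trace + (P1 * S2 * P1ᵀ).trace := by
  classical
  have hkn : k < n := by omega
  have hkmn : k + m ≤ n := by omega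
  rw [transpose_fromRows, fromRows_mul_fromCols, ← fromBlocks_one] at hortho
  obtain ⟨hP0, -, -, hP1⟩ := fromBlocks_inj.mp hortho
  obtain ⟨t, ht0, ht1, htsum, htr0⟩ := proj_facts S1 h1 P0 hP0
  obtain ⟨s, hs0, -, hssum, htr1⟩ := proj_facts S2 h2 P1 hP1
  -- bound for the P0 part
  have htr0' : (P0 * S1 * P0ᵀ).trace = ∑ j, e1 j * t (σ1 j) := by
    rw [htr0, ← Equiv.sum_comp σ1 (fun j => h1.isHermitian.eigenvalues j * t j), he1]
    simp
  have hT0 : ∑ i ∈ univ.filter (fun i : Fin n => k + m ≤ (i : ℕ)), e1 i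
      ≤ (P0 * S1 * P0ᵀ).trace := by
    rw [htr0']
    refine comb hkmn e1 (fun j => t (σ1 j)) hmono1 ?_ (fun i => ht0 _) (fun i => ht1 _) ?_
    · intro i; rw [he1]; exact h1.eigenvalues_nonneg (σ1 i)
    · rw [Equiv.sum_comp σ1 t, htsum]
      congr 1
      omega
  -- bound for the P1 part
  have hlow : ∀ j, e2 ⟨n - 1, by omega⟩ ≤ h2.isHermitian.eigenvalues j := by
    intro j
    have hj : h2.isHermitian.eigenvalues j = e2 (σ2.symm j) := by rw [he2]; simp
    rw [hj]
    exact hmono2 (by rw [Fin.le_def]; simp; omega)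
  have hT1 : e1 ⟨k, by omega⟩ * m ≤ (P1 * S2 * P1ᵀ).trace := by
    rw [htr1]
    calc e1 ⟨k, by omega⟩ * m ≤ e2 ⟨n - 1, by omega⟩ * m :=
          mul_le_mul_of_nonneg_right hgap (Nat.cast_nonneg m)
      _ = ∑ j, e2 ⟨n - 1, by omega⟩ * s j := by rw [← Finset.mul_sum, hssum]
      _ ≤ ∑ j, h2.isHermitian.eigenvalues j * s j :=
          Finset.sum_le_sum fun j _ => mul_le_mul_of_nonneg_right (hlow j) (hs0 j)
  -- the middle chunk
  set B := (univ.filter (fun i : Fin n => k ≤ (i : ℕ))).filter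
      (fun i : Fin n => ¬ (k + m ≤ (i : ℕ))) with hBdef
  have hff : (univ.filter (fun i : Fin n => k ≤ (i : ℕ))).filter
        (fun i : Fin n => k + m ≤ (i : ℕ))
      = univ.filter (fun i : Fin n => k + m ≤ (i : ℕ)) := by
    ext i; simp only [Finset.mem_filter, Finset.mem_univ, true_and]; omega
  have hBcard : B.card = m := by
    have hc := Finset.card_filter_add_card_filter_not
      (s := univ.filter (fun i : Fin n => k ≤ (i : ℕ)))
      (p := fun i : Fin n => k + m ≤ (i : ℕ))
    rw [hff, card_filter_ge hkmn, card_filter_ge (le_of_lt hkn), ← hBdef] at hc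
    omega
  have hB : ∑ i ∈ B, e1 i ≤ m * e1 ⟨k, by omega⟩ := by
    have hle := Finset.sum_le_card_nsmul B e1 (e1 ⟨k, by omega⟩) (fun i hi => by
      refine hmono1 (Fin.le_def.mpr ?_)
      have := (Finset.mem_filter.mp (Finset.mem_filter.mp hi).1).2
      exact this)
    rwa [hBcard, nsmul_eq_mul] at hle
  have hsplit := Finset.sum_filter_add_sum_filter_not
    (univ.filter (fun i : Fin n => k ≤ (i : ℕ))) (fun i : Fin n => k + m ≤ (i : ℕ)) e1
  rw [hff, ← hBdef] at hsplit
  have := mul_comm (m : ℝ) (e1 ⟨k, by omega⟩)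
  linarith
end

section
/- (No ex-ante restriction without substantial uncaptured misalignment.) Let S₁ and S₂ be real symmetric positive semidefinite n×n matrices, let 0 ≤ k ≤ n − 1, and suppose λ↓ₙ(S₂) ≥ λ↓_{k+1}(S₁). Consider the minimization, over all m ∈ {0, 1, …, n−k} and all pairs P₀ ∈ ℝ^{(n−k−m)×n}, P₁ ∈ ℝ^{m×n} such that the stacked (n−k)×n matrix with P₀ on top of P₁ has orthonormal rows, of the objective trace(P₀ S₁ P₀ᵀ) + trace(P₁ S₂ P₁ᵀ). Then the minimum value equals Σ_{i=k+1}^{n} λ↓ᵢ(S₁) and is attained at m = 0, i.e., by a configuration with no ex-ante restriction. Interpreted in the regulation model with S₁ = E[(Ω^{1/2}(ū−w̄))(Ω^{1/2}(ū−w̄))ᵀ] and S₂ = Var(Ω^{1/2} w̄): when the smallest eigenvalue of the state-uncertainty matrix is at least the (k+1)-st largest eigenvalue of the misalignment matrix, there is a second-best solution for the principal that uses a k-dimensional explainer and no ex-ante restriction. -/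
open Matrix Finset

lemma fin_filter_card (n : ℕ) (p : ℕ → Prop) [DecidablePred p] :
    ((univ : Finset (Fin n)).filter (fun j : Fin n => p (j : ℕ))).card
      = ((Finset.range n).filter p).card := by
  rw [Finset.card_filter, Finset.card_filter]
  exact Fin.sum_univ_eq_sum_range (fun j => if p j then 1 else 0) n

lemma fin_filter_ge_card (n r : ℕ) (hr : r ≤ n) :
    ((univ : Finset (Fin n)).filter (fun j : Fin n => n - r ≤ (j : ℕ))).card = r := by
  rw [fin_filter_card]
  have h : (Finset.range n).filter (fun j => n - r ≤ j) = Finset.Ico (n - r) n := by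
    ext j; simp [Finset.mem_Ico]; omega
  rw [h, Nat.card_Ico]; omega

/-- Key combinatorial lemma: if `e` is antitone and `q` takes values in `[0,1]` with
total sum `r ≤ n`, then `∑ e j * q j ≥ ∑_{j ≥ n - r} e j`. -/
lemma comb_lemma {n r : ℕ} (hn : 0 < n) (hr : r ≤ n) (e q : Fin n → ℝ)
    (hmono : Antitone e) (hq0 : ∀ j, 0 ≤ q j) (hq1 : ∀ j, q j ≤ 1)
    (hsum : ∑ j, q j = r) :
    ∑ j ∈ univ.filter (fun j : Fin n => n - r ≤ (j : ℕ)), e j ≤ ∑ j, e j * q j := by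
  set t : ℝ := e ⟨min (n - r) (n - 1), by omega⟩ with ht
  set χ : Fin n → ℝ := fun j => if n - r ≤ (j : ℕ) then 1 else 0 with hχ
  have hχsum : ∑ j, χ j = r := by
    rw [hχ, Finset.sum_boole, fin_filter_ge_card n r hr]
  have hnonneg : ∀ j : Fin n, 0 ≤ (e j - t) * (q j - χ j) := by
    intro j
    rcases le_or_gt (n - r) (j : ℕ) with hj | hj
    · have hχj : χ j = 1 := by simp only [hχ, if_pos hj]
      have h1 : e j ≤ t := hmono (by simp only [Fin.le_def]; omega)
      nlinarith [hq1 j]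
    · have hnle : ¬ n - r ≤ (j : ℕ) := by omega
      have hχj : χ j = 0 := by simp only [hχ, if_neg hnle]
      have h1 : t ≤ e j := hmono (by simp only [Fin.le_def]; omega)
      nlinarith [hq0 j]
  have hind : ∑ j ∈ univ.filter (fun j : Fin n => n - r ≤ (j : ℕ)), e j
      = ∑ j, e j * χ j := by
    rw [Finset.sum_filter]
    refine Finset.sum_congr rfl fun j _ => ?_
    simp only [hχ]
    by_cases h : n - r ≤ (j : ℕ)
    · rw [if_pos h, if_pos h, mul_one]
    · rw [if_neg h, if_neg h, mul_zero]
  have hexpand : ∑ j, (e j - t) * (q j - χ j)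
      = (∑ j, e j * q j) - (∑ j, e j * χ j) - t * (∑ j, q j) + t * (∑ j, χ j) := by
    rw [Finset.mul_sum, Finset.mul_sum, ← Finset.sum_sub_distrib, ← Finset.sum_sub_distrib,
      ← Finset.sum_add_distrib]
    exact Finset.sum_congr rfl fun j _ => by ring
  have h0 : (0:ℝ) ≤ ∑ j, (e j - t) * (q j - χ j) :=
    Finset.sum_nonneg fun j _ => hnonneg j
  rw [hexpand, hsum, hχsum] at h0
  linarith [hind]

lemma trace_BDB {n r : ℕ} (B : Matrix (Fin r) (Fin n) ℝ) (d : Fin n → ℝ) :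
    (B * diagonal d * Bᵀ).trace = ∑ j, d j * ∑ i, (B i j)^2 := by
  rw [Matrix.trace]
  simp only [Matrix.diag_apply, Matrix.mul_apply, Matrix.transpose_apply,
    Matrix.diagonal_apply, mul_ite, mul_zero, ite_mul, zero_mul,
    Finset.sum_ite_eq, Finset.sum_ite_eq', Finset.mem_univ, if_true]
  rw [Finset.sum_comm]
  refine Finset.sum_congr rfl fun j _ => ?_
  rw [Finset.mul_sum]
  exact Finset.sum_congr rfl fun i _ => by ring

lemma col_sq_le_one {n r : ℕ} (B : Matrix (Fin r) (Fin n) ℝ) (hBB : B * Bᵀ = 1)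
    (j : Fin n) : ∑ i, (B i j)^2 ≤ 1 := by
  set M : Matrix (Fin n) (Fin n) ℝ := Bᵀ * B with hM
  have hsym : ∀ a b, M a b = M b a := by
    intro a b; simp [hM, Matrix.mul_apply, mul_comm]
  have hMM : M * M = M := by
    rw [hM, Matrix.mul_assoc, ← Matrix.mul_assoc B Bᵀ B, hBB, Matrix.one_mul]
  have hd : M j j = ∑ i, (B i j)^2 := by
    simp [hM, Matrix.mul_apply, sq]
  have h1 : M j j = ∑ i2, M j i2 ^ 2 := by
    have h := congrFun (congrFun hMM j) j
    rw [Matrix.mul_apply] at h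
    rw [← h]
    exact Finset.sum_congr rfl fun i2 _ => by rw [hsym i2 j]; ring
  have h2 : M j j ^ 2 ≤ M j j := by
    conv_rhs => rw [h1]
    exact Finset.single_le_sum (f := fun i2 => M j i2 ^ 2)
      (fun i _ => sq_nonneg _) (Finset.mem_univ j)
  have h3 : 0 ≤ M j j := hd ▸ Finset.sum_nonneg fun i _ => sq_nonneg _
  nlinarith [hd ▸ h2]

lemma col_sq_sum {n r : ℕ} (B : Matrix (Fin r) (Fin n) ℝ) (hBB : B * Bᵀ = 1) :
    ∑ j, ∑ i, (B i j)^2 = (r : ℝ) := by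
  have : ∑ j : Fin n, ∑ i : Fin r, (B i j)^2 = (B * Bᵀ).trace := by
    rw [Matrix.trace, Finset.sum_comm]
    refine Finset.sum_congr rfl fun i _ => ?_
    simp [Matrix.mul_apply, sq]
  rw [this, hBB, Matrix.trace_one]
  simp

/-- Ky Fan type bound: for `P` with orthonormal rows, `trace (P S Pᵀ)` is at least
the sum of the `r` smallest eigenvalues of the Hermitian matrix `S`. -/
lemma trace_lb {n r : ℕ} (hn : 0 < n) (hr : r ≤ n)
    (S : Matrix (Fin n) (Fin n) ℝ) (hS : S.IsHermitian)
    (e : Fin n → ℝ) (hmono : Antitone e) (σ : Equiv.Perm (Fin n))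
    (he : e = hS.eigenvalues ∘ σ)
    (P : Matrix (Fin r) (Fin n) ℝ) (hP : P * Pᵀ = 1) :
    ∑ j ∈ univ.filter (fun j : Fin n => n - r ≤ (j : ℕ)), e j ≤ (P * S * Pᵀ).trace := by
  classical
  set U : Matrix (Fin n) (Fin n) ℝ := (hS.eigenvectorUnitary : Matrix (Fin n) (Fin n) ℝ) with hU
  have hUstar : star U = Uᵀ := by ext i j; simp [Matrix.star_apply]
  have hUU : U * Uᵀ = 1 := by
    rw [← hUstar]; exact (Matrix.mem_unitaryGroup_iff).mp hS.eigenvectorUnitary.2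
  have hspec : S = U * diagonal hS.eigenvalues * Uᵀ := by
    conv_lhs => rw [hS.spectral_theorem]
    rw [Unitary.conjStarAlgAut_apply, hUstar, RCLike.ofReal_real_eq_id]
    simp
    rfl
  set B : Matrix (Fin r) (Fin n) ℝ := P * U with hB
  have hBB : B * Bᵀ = 1 := by
    rw [hB, Matrix.transpose_mul, Matrix.mul_assoc, ← Matrix.mul_assoc U Uᵀ Pᵀ, hUU,
      Matrix.one_mul, hP]
  have harr : P * S * Pᵀ = B * diagonal hS.eigenvalues * Bᵀ := by
    conv_lhs => rw [hspec]
    rw [hB, Matrix.transpose_mul]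
    simp only [Matrix.mul_assoc]
  set q : Fin n → ℝ := fun j => ∑ i, (B i j)^2 with hq
  have htr : (P * S * Pᵀ).trace = ∑ j, hS.eigenvalues j * q j := by
    rw [harr, trace_BDB]
  have hq0 : ∀ j, 0 ≤ q j := fun j => Finset.sum_nonneg fun i _ => sq_nonneg _
  have hq1 : ∀ j, q j ≤ 1 := fun j => col_sq_le_one B hBB j
  have hqsum : ∑ j, q j = (r : ℝ) := col_sq_sum B hBB
  have hperm : ∑ j, hS.eigenvalues j * q j = ∑ j, e j * q (σ j) := by
    rw [← Equiv.sum_comp σ (fun j => hS.eigenvalues j * q j)]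
    exact Finset.sum_congr rfl fun j _ => by rw [he]; rfl
  have hqσsum : ∑ j, q (σ j) = (r : ℝ) := by
    rw [Equiv.sum_comp σ q, hqsum]
  rw [htr, hperm]
  exact comb_lemma hn hr e (fun j => q (σ j)) hmono (fun j => hq0 _) (fun j => hq1 _) hqσsum

/-- No ex-ante restriction without substantial uncaptured misalignment:
for real symmetric PSD matrices `S₁` (misalignment) and `S₂` (state uncertainty) with
decreasing eigenvalue listings `e₁, e₂`, if `λ↓ₙ(S₂) ≥ λ↓_{k+1}(S₁)`, then over all
`m ≤ n − k` and all `P₀ ∈ ℝ^{(n−k−m)×n}`, `P₁ ∈ ℝ^{m×n}` whose stacked matrix has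
orthonormal rows, the objective `trace(P₀ S₁ P₀ᵀ) + trace(P₁ S₂ P₁ᵀ)` is bounded below by
`Σ_{i=k+1}^{n} λ↓ᵢ(S₁)`, and this minimum value is attained at `m = 0` (no ex-ante
restriction). -/
theorem no_exante_restriction_second_best
    {n k : ℕ} (hn : 0 < n) (hk : k ≤ n - 1)
    (S1 S2 : Matrix (Fin n) (Fin n) ℝ)
    (h1 : S1.PosSemidef) (h2 : S2.PosSemidef)
    (e1 e2 : Fin n → ℝ) (hmono1 : Antitone e1) (hmono2 : Antitone e2)
    (σ1 σ2 : Equiv.Perm (Fin n))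
    (he1 : e1 = h1.isHermitian.eigenvalues ∘ σ1)
    (he2 : e2 = h2.isHermitian.eigenvalues ∘ σ2)
    (hgap : e1 ⟨k, by omega⟩ ≤ e2 ⟨n - 1, by omega⟩) :
    (∀ m : ℕ, m ≤ n - k →
      ∀ (P0 : Matrix (Fin (n - k - m)) (Fin n) ℝ) (P1 : Matrix (Fin m) (Fin n) ℝ),
        Matrix.fromRows P0 P1 * (Matrix.fromRows P0 P1)ᵀ = 1 →
        (∑ i ∈ univ.filter (fun i : Fin n => k ≤ (i : ℕ)), e1 i)
          ≤ (P0 * S1 * P0ᵀ).trace + (P1 * S2 * P1ᵀ).trace) ∧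
    (∃ (P0 : Matrix (Fin (n - k)) (Fin n) ℝ) (P1 : Matrix (Fin 0) (Fin n) ℝ),
      Matrix.fromRows P0 P1 * (Matrix.fromRows P0 P1)ᵀ = 1 ∧
      (P0 * S1 * P0ᵀ).trace + (P1 * S2 * P1ᵀ).trace
        = ∑ i ∈ univ.filter (fun i : Fin n => k ≤ (i : ℕ)), e1 i) := by
  classical
  have hkn : k < n := by omega
  constructor
  · -- lower bound
    intro m hm P0 P1 horth
    rw [Matrix.transpose_fromRows, Matrix.fromRows_mul_fromCols, ← Matrix.fromBlocks_one] at horth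
    have h00 : P0 * P0ᵀ = 1 := by
      ext i j
      have := congrFun (congrFun horth (Sum.inl i)) (Sum.inl j)
      simpa [Matrix.fromBlocks] using this
    have h11 : P1 * P1ᵀ = 1 := by
      ext i j
      have := congrFun (congrFun horth (Sum.inr i)) (Sum.inr j)
      simpa [Matrix.fromBlocks] using this
    have lb0 := trace_lb hn (by omega : n - k - m ≤ n) S1 h1.isHermitian e1 hmono1 σ1 he1 P0 h00
    have lb1 := trace_lb hn (by omega : m ≤ n) S2 h2.isHermitian e2 hmono2 σ2 he2 P1 h11
    have hnk : n - (n - k - m) = k + m := by omega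
    rw [hnk] at lb0
    -- split the target sum
    have hsplit : ∑ i ∈ univ.filter (fun i : Fin n => k ≤ (i : ℕ)), e1 i
        = (∑ i ∈ univ.filter (fun i : Fin n => k ≤ (i : ℕ) ∧ (i : ℕ) < k + m), e1 i)
          + ∑ i ∈ univ.filter (fun i : Fin n => k + m ≤ (i : ℕ)), e1 i := by
      rw [← Finset.sum_filter_add_sum_filter_not (univ.filter (fun i : Fin n => k ≤ (i : ℕ)))
        (fun i : Fin n => (i : ℕ) < k + m) e1]
      congr 1
      · rw [Finset.filter_filter]
      · rw [Finset.filter_filter]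
        apply Finset.sum_congr _ fun _ _ => rfl
        ext j; simp; omega
    -- middle block bound
    have hmidcard : (univ.filter (fun i : Fin n => k ≤ (i : ℕ) ∧ (i : ℕ) < k + m)).card = m := by
      rw [fin_filter_card n (fun j => k ≤ j ∧ j < k + m)]
      have h : (Finset.range n).filter (fun j => k ≤ j ∧ j < k + m) = Finset.Ico k (k + m) := by
        ext j; simp [Finset.mem_Ico]; omega
      rw [h, Nat.card_Ico]; omega
    have hmid : ∑ i ∈ univ.filter (fun i : Fin n => k ≤ (i : ℕ) ∧ (i : ℕ) < k + m), e1 i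
        ≤ (m : ℝ) * e1 ⟨k, hkn⟩ := by
      have := Finset.sum_le_card_nsmul
        (univ.filter (fun i : Fin n => k ≤ (i : ℕ) ∧ (i : ℕ) < k + m)) e1 (e1 ⟨k, hkn⟩)
        (fun j hj => by
          rw [Finset.mem_filter] at hj
          exact hmono1 (by simp only [Fin.le_def]; exact hj.2.1))
      simp only [hmidcard, nsmul_eq_mul] at this
      exact this
    have htailcard : (univ.filter (fun j : Fin n => n - m ≤ (j : ℕ))).card = m :=
      fin_filter_ge_card n m (by omega)
    have htail : (m : ℝ) * e2 ⟨n - 1, by omega⟩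
        ≤ ∑ j ∈ univ.filter (fun j : Fin n => n - m ≤ (j : ℕ)), e2 j := by
      have := Finset.card_nsmul_le_sum
        (univ.filter (fun j : Fin n => n - m ≤ (j : ℕ))) e2 (e2 ⟨n - 1, by omega⟩)
        (fun j _ => hmono2 (by simp only [Fin.le_def]; omega))
      simp only [htailcard, nsmul_eq_mul] at this
      exact this
    have hmul : (m : ℝ) * e1 ⟨k, hkn⟩ ≤ (m : ℝ) * e2 ⟨n - 1, by omega⟩ :=
      mul_le_mul_of_nonneg_left hgap (Nat.cast_nonneg m)
    rw [hsplit]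
    linarith
  · -- attainment
    set U : Matrix (Fin n) (Fin n) ℝ :=
      (h1.isHermitian.eigenvectorUnitary : Matrix (Fin n) (Fin n) ℝ) with hU
    have hUstar : star U = Uᵀ := by ext i j; simp [Matrix.star_apply]
    have hUU' : Uᵀ * U = 1 := by
      rw [← hUstar]; exact (Matrix.mem_unitaryGroup_iff').mp h1.isHermitian.eigenvectorUnitary.2
    set f : Fin (n - k) → Fin n := fun i => σ1 ⟨k + (i : ℕ), by omega⟩ with hf
    have hfinj : Function.Injective f := by
      intro a b hab
      have := σ1.injective hab
      have h' : k + (a : ℕ) = k + (b : ℕ) := congrArg Fin.val this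
      exact Fin.ext (by omega)
    set P0 : Matrix (Fin (n - k)) (Fin n) ℝ := Matrix.of fun i j => U j (f i) with hP0
    set P1 : Matrix (Fin 0) (Fin n) ℝ := 0 with hP1
    have h00 : P0 * P0ᵀ = 1 := by
      ext i i'
      have hent := congrFun (congrFun hUU' (f i)) (f i')
      rw [Matrix.mul_apply] at hent
      rw [Matrix.mul_apply]
      have hL : ∑ j, P0 i j * P0ᵀ j i' = ∑ j, Uᵀ (f i) j * U j (f i') :=
        Finset.sum_congr rfl fun j _ => by
          simp [hP0, Matrix.transpose_apply]
      rw [hL, hent]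
      by_cases h : i = i'
      · subst h; simp [Matrix.one_apply]
      · have : f i ≠ f i' := fun hc => h (hfinj hc)
        simp [Matrix.one_apply, h, this]
    refine ⟨P0, P1, ?_, ?_⟩
    · rw [Matrix.transpose_fromRows, Matrix.fromRows_mul_fromCols, ← Matrix.fromBlocks_one]
      rw [h00, Subsingleton.elim (P0 * P1ᵀ) 0, Subsingleton.elim (P1 * P0ᵀ) 0,
        Subsingleton.elim (P1 * P1ᵀ) 1]
    · have htr1 : (P1 * S2 * P1ᵀ).trace = 0 := by
        rw [Matrix.trace]
        exact Finset.sum_of_isEmpty _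
      have hdiag : Uᵀ * S1 * U = diagonal h1.isHermitian.eigenvalues := by
        have h := h1.isHermitian.conjStarAlgAut_star_eigenvectorUnitary
        rw [Unitary.conjStarAlgAut_star_apply] at h
        rw [hUstar, RCLike.ofReal_real_eq_id] at h
        simpa using h
      have hkey : ∀ i : Fin (n - k), (P0 * S1 * P0ᵀ) i i = (Uᵀ * S1 * U) (f i) (f i) := by
        intro i
        simp only [Matrix.mul_apply, Matrix.transpose_apply, hP0, Matrix.of_apply]
      have htr0 : (P0 * S1 * P0ᵀ).trace = ∑ i : Fin (n - k), e1 ⟨k + (i : ℕ), by omega⟩ := by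
        rw [Matrix.trace]
        refine Finset.sum_congr rfl fun i _ => ?_
        rw [Matrix.diag_apply, hkey i, hdiag, Matrix.diagonal_apply_eq, he1]
        rfl
      have hreindex : ∑ i : Fin (n - k), e1 ⟨k + (i : ℕ), by omega⟩
          = ∑ i ∈ univ.filter (fun i : Fin n => k ≤ (i : ℕ)), e1 i := by
        refine Finset.sum_bij (fun (i : Fin (n - k)) _ => (⟨k + (i : ℕ), by omega⟩ : Fin n))
          (fun i _ => by simp) ?_ ?_ ?_
        · intro a _ b _ hab
          have := congrArg Fin.val hab
          simp only at this
          exact Fin.ext (by omega)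
        · intro j hj
          rw [Finset.mem_filter] at hj
          refine ⟨⟨(j : ℕ) - k, by omega⟩, Finset.mem_univ _, ?_⟩
          exact Fin.ext (by simp; omega)
        · intro i _; rfl
      rw [htr0, htr1, hreindex, add_zero]
end

section
/- (Lending example: audit based on the best prediction explainer.) Let X₁ be Bernoulli(1/2) and X₂ be Bernoulli(p) with p ∈ (0,1), X₁ and X₂ independent. Fix real numbers α, β, γ, δ (the true parameters, with s(x₁,x₂) = α + βx₁ + γx₂ + δx₁x₂) and real numbers Δ₀, Δ₁ (the misaligned agent's distortion preferences). Consider minimizing, over all (a,b,c,d) ∈ ℝ⁴ defining f(x₁,x₂) = a + bx₁ + cx₂ + dx₁x₂, the objective E[(f(X₁,X₂) − s(X₁,X₂) − Δ₀ − Δ₁X₂)²], subject to the explainer constraints E[f(X₁,X₂) | X₁ = x] = E[s(X₁,X₂) | X₁ = x] for x ∈ {0,1}. Then the unique minimizer is (a,b,c,d) = (α − pΔ₁, β, γ + Δ₁, δ), i.e., f(x₁,x₂) = s(x₁,x₂) + Δ₁(x₂ − p), and at this optimum the welfare loss is E[(f(X₁,X₂) − s(X₁,X₂))²] = p(1 −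 p) Δ₁². -/
open MeasureTheory ProbabilityTheory

/-- The fully interacted two-binary-covariate linear score `a + b x₁ + c x₂ + d x₁ x₂`. -/
def linearScore (a b c d x1 x2 : ℝ) : ℝ := a + b * x1 + c * x2 + d * x1 * x2

section aux
variable {α' : Type*} [MeasurableSpace α'] (μ : Measure α') [IsProbabilityMeasure μ]
    (p : ℝ)
    (X1 X2 : α' → ℝ) (hm1 : Measurable X1) (hm2 : Measurable X2)
    (hv1 : ∀ᵐ ω ∂μ, X1 ω = 0 ∨ X1 ω = 1) (hv2 : ∀ᵐ ω ∂μ, X2 ω = 0 ∨ X2 ω = 1)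
    (hmean1 : ∫ ω, X1 ω ∂μ = 1 / 2) (hmean2 : ∫ ω, X2 ω ∂μ = p)
    (hindep : IndepFun X1 X2 μ)

include hm1 hm2 hv1 hv2 hmean1 hmean2 hindep

lemma master (h : ℝ → ℝ → ℝ) :
    ∫ ω, h (X1 ω) (X2 ω) ∂μ
      = (h 0 0 + h 1 0) * ((1 - p) / 2) + (h 0 1 + h 1 1) * (p / 2) := by
  have i1 : Integrable X1 μ := by
    refine (integrable_const (1:ℝ)).mono' hm1.aestronglyMeasurable ?_
    filter_upwards [hv1] with ω hω; rcases hω with h | h <;> simp [h]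
  have i2 : Integrable X2 μ := by
    refine (integrable_const (1:ℝ)).mono' hm2.aestronglyMeasurable ?_
    filter_upwards [hv2] with ω hω; rcases hω with h | h <;> simp [h]
  have i12 : Integrable (fun ω => X1 ω * X2 ω) μ := by
    refine (integrable_const (1:ℝ)).mono' (hm1.mul hm2).aestronglyMeasurable ?_
    filter_upwards [hv1, hv2] with ω h1 h2
    rcases h1 with h1 | h1 <;> rcases h2 with h2 | h2 <;> simp [h1, h2]
  have hmul : ∫ ω, X1 ω * X2 ω ∂μ = (1 / 2) * p := by
    have := hindep.integral_mul_eq_mul_integral i1.aestronglyMeasurable i2.aestronglyMeasurable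
    simpa [Pi.mul_apply, hmean1, hmean2] using this
  have hae : (fun ω => h (X1 ω) (X2 ω)) =ᵐ[μ]
      fun ω => h 0 0 + (h 1 0 - h 0 0) * X1 ω + (h 0 1 - h 0 0) * X2 ω
        + (h 1 1 - h 1 0 - h 0 1 + h 0 0) * (X1 ω * X2 ω) := by
    filter_upwards [hv1, hv2] with ω h1 h2
    rcases h1 with h1 | h1 <;> rcases h2 with h2 | h2 <;> rw [h1, h2] <;> ring
  rw [integral_congr_ae hae]
  have hf2 : Integrable (fun ω => h 0 0 + (h 1 0 - h 0 0) * X1 ω) μ :=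
    (integrable_const _).add (i1.const_mul _)
  have hf1 : Integrable
      (fun ω => h 0 0 + (h 1 0 - h 0 0) * X1 ω + (h 0 1 - h 0 0) * X2 ω) μ :=
    hf2.add (i2.const_mul _)
  rw [integral_add hf1 (i12.const_mul _), integral_add hf2 (i2.const_mul _),
    integral_add (integrable_const _) (i1.const_mul _),
    integral_const_mul, integral_const_mul, integral_const_mul, integral_const,
    hmean1, hmean2, hmul]
  simp; ring

lemma master1 (g : ℝ → ℝ → ℝ) :
    ∫ ω in {ω | X1 ω = 1}, g (X1 ω) (X2 ω) ∂μ
      = g 1 0 * ((1 - p) / 2) + g 1 1 * (p / 2) := by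
  have hs : MeasurableSet {ω | X1 ω = 1} := hm1 (measurableSet_singleton 1)
  rw [← integral_indicator hs]
  have hae : (fun ω => ({ω | X1 ω = 1}).indicator (fun ω => g (X1 ω) (X2 ω)) ω)
      =ᵐ[μ] fun ω => (fun x1 x2 => x1 * g x1 x2) (X1 ω) (X2 ω) := by
    filter_upwards [hv1] with ω hω
    rcases hω with h | h <;> simp [Set.indicator_apply, Set.mem_setOf_eq, h]
  rw [integral_congr_ae hae]
  exact (master μ p X1 X2 hm1 hm2 hv1 hv2 hmean1 hmean2 hindep
    (fun x1 x2 => x1 * g x1 x2)).trans (by norm_num)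

lemma master0 (g : ℝ → ℝ → ℝ) :
    ∫ ω in {ω | X1 ω = 0}, g (X1 ω) (X2 ω) ∂μ
      = g 0 0 * ((1 - p) / 2) + g 0 1 * (p / 2) := by
  have hs : MeasurableSet {ω | X1 ω = 0} := hm1 (measurableSet_singleton 0)
  rw [← integral_indicator hs]
  have hae : (fun ω => ({ω | X1 ω = 0}).indicator (fun ω => g (X1 ω) (X2 ω)) ω)
      =ᵐ[μ] fun ω => (fun x1 x2 => (1 - x1) * g x1 x2) (X1 ω) (X2 ω) := by
    filter_upwards [hv1] with ω hω
    rcases hω with h | h <;> simp [Set.indicator_apply, Set.mem_setOf_eq, h]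
  rw [integral_congr_ae hae]
  exact (master μ p X1 X2 hm1 hm2 hv1 hv2 hmean1 hmean2 hindep
    (fun x1 x2 => (1 - x1) * g x1 x2)).trans (by norm_num)

end aux

set_option maxHeartbeats 1000000 in
/-- Lending example: audit based on the best prediction explainer:
with `X₁ ~ Bernoulli(1/2)` and `X₂ ~ Bernoulli(p)` independent, true score
`s = linearScore α β γ δ`, and distortion preferences `Δ₀, Δ₁`, the unique minimizer of
`E[(f − s − Δ₀ − Δ₁X₂)²]` over prediction functions `f = linearScore a b c d` subject to
the explainer constraints `E[f | X₁ = x] = E[s | X₁ = x]` (stated as set-integral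
equalities over `{X₁ = x}` for `x ∈ {0,1}`) is `(a,b,c,d) = (α − pΔ₁, β, γ + Δ₁, δ)`,
and at this optimum the welfare loss is `E[(f − s)²] = p(1 − p)Δ₁²`. -/
theorem lending_best_prediction_explainer_audit
    {α' : Type*} [MeasurableSpace α'] (μ : Measure α') [IsProbabilityMeasure μ]
    (p : ℝ) (hp0 : 0 < p) (hp1 : p < 1)
    (X1 X2 : α' → ℝ) (hm1 : Measurable X1) (hm2 : Measurable X2)
    (hv1 : ∀ᵐ ω ∂μ, X1 ω = 0 ∨ X1 ω = 1) (hv2 : ∀ᵐ ω ∂μ, X2 ω = 0 ∨ X2 ω = 1)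
    (hmean1 : ∫ ω, X1 ω ∂μ = 1 / 2) (hmean2 : ∫ ω, X2 ω ∂μ = p)
    (hindep : IndepFun X1 X2 μ)
    (α β γ δ Δ0 Δ1 : ℝ) :
    -- the claimed optimum satisfies the explainer constraints
    (∀ x ∈ ({0, 1} : Set ℝ),
      ∫ ω in {ω | X1 ω = x}, linearScore (α - p * Δ1) β (γ + Δ1) δ (X1 ω) (X2 ω) ∂μ
        = ∫ ω in {ω | X1 ω = x}, linearScore α β γ δ (X1 ω) (X2 ω) ∂μ) ∧
    -- it is the unique minimizer of the agent's objective over the constraint set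
    (∀ a b c d : ℝ,
      (∀ x ∈ ({0, 1} : Set ℝ),
        ∫ ω in {ω | X1 ω = x}, linearScore a b c d (X1 ω) (X2 ω) ∂μ
          = ∫ ω in {ω | X1 ω = x}, linearScore α β γ δ (X1 ω) (X2 ω) ∂μ) →
      (a, b, c, d) ≠ (α - p * Δ1, β, γ + Δ1, δ) →
      ∫ ω, (linearScore (α - p * Δ1) β (γ + Δ1) δ (X1 ω) (X2 ω)
              - linearScore α β γ δ (X1 ω) (X2 ω) - Δ0 - Δ1 * X2 ω) ^ 2 ∂μ
        < ∫ ω, (linearScore a b c d (X1 ω) (X2 ω)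
              - linearScore α β γ δ (X1 ω) (X2 ω) - Δ0 - Δ1 * X2 ω) ^ 2 ∂μ) ∧
    -- at the optimum the welfare loss equals p(1 − p)Δ₁²
    ∫ ω, (linearScore (α - p * Δ1) β (γ + Δ1) δ (X1 ω) (X2 ω)
            - linearScore α β γ δ (X1 ω) (X2 ω)) ^ 2 ∂μ = p * (1 - p) * Δ1 ^ 2 := by
  
  have M := master μ p X1 X2 hm1 hm2 hv1 hv2 hmean1 hmean2 hindep
  have S0 := master0 μ p X1 X2 hm1 hm2 hv1 hv2 hmean1 hmean2 hindep
  have S1 := master1 μ p X1 X2 hm1 hm2 hv1 hv2 hmean1 hmean2 hindep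
  refine ⟨?_, ?_, ?_⟩
  · intro x hx
    simp only [Set.mem_insert_iff, Set.mem_singleton_iff] at hx
    rcases hx with rfl | rfl
    · rw [S0 (linearScore (α - p * Δ1) β (γ + Δ1) δ), S0 (linearScore α β γ δ)]
      simp only [linearScore]; ring
    · rw [S1 (linearScore (α - p * Δ1) β (γ + Δ1) δ), S1 (linearScore α β γ δ)]
      simp only [linearScore]; ring
  · intro a b c d hcon hne
    have hc0 := hcon 0 (by simp)
    have hc1 := hcon 1 (by simp)
    rw [S0 (linearScore a b c d), S0 (linearScore α β γ δ)] at hc0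
    rw [S1 (linearScore a b c d), S1 (linearScore α β γ δ)] at hc1
    simp only [linearScore] at hc0 hc1
    have ha : a = α - p * (c - γ) := by linear_combination 2 * hc0
    have hb : b = β - p * (d - δ) := by linear_combination 2 * hc1 - 2 * hc0
    have eL := M (fun x1 x2 => (linearScore (α - p * Δ1) β (γ + Δ1) δ x1 x2
      - linearScore α β γ δ x1 x2 - Δ0 - Δ1 * x2) ^ 2)
    have eR := M (fun x1 x2 => (linearScore a b c d x1 x2
      - linearScore α β γ δ x1 x2 - Δ0 - Δ1 * x2) ^ 2)
    have hpp : 0 < p * (1 - p) := mul_pos hp0 (by linarith)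
    have eL2 : ∫ ω, (linearScore (α - p * Δ1) β (γ + Δ1) δ (X1 ω) (X2 ω)
          - linearScore α β γ δ (X1 ω) (X2 ω) - Δ0 - Δ1 * X2 ω) ^ 2 ∂μ
        = (Δ0 + p * Δ1) ^ 2 :=
      eL.trans (by simp only [linearScore]; ring)
    have eR2 : ∫ ω, (linearScore a b c d (X1 ω) (X2 ω)
          - linearScore α β γ δ (X1 ω) (X2 ω) - Δ0 - Δ1 * X2 ω) ^ 2 ∂μ
        = (Δ0 + p * Δ1) ^ 2
          + p * (1 - p) / 2 * ((c - γ - Δ1) ^ 2 + ((c - γ - Δ1) + (d - δ)) ^ 2) :=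
      eR.trans (by simp only [linearScore]; rw [ha, hb]; ring)
    rw [eL2, eR2]
    by_cases hc : c = γ + Δ1
    · have hd : d ≠ δ := by
        intro hd
        apply hne
        rw [ha, hb, hc, hd]
        simp only [Prod.mk.injEq]
        exact ⟨by ring, by ring, trivial⟩
      have ht : 0 < (d - δ) ^ 2 :=
        lt_of_le_of_ne (sq_nonneg _) (Ne.symm (pow_ne_zero 2 (sub_ne_zero.mpr hd)))
      have hs0 : c - γ - Δ1 = 0 := by rw [hc]; ring
      rw [hs0, show ((0:ℝ) ^ 2 + (0 + (d - δ)) ^ 2) = (d - δ) ^ 2 by ring]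
      have := mul_pos (show (0:ℝ) < p * (1 - p) / 2 by linarith) ht
      linarith
    · have hs : 0 < (c - γ - Δ1) ^ 2 :=
        lt_of_le_of_ne (sq_nonneg _) (Ne.symm (pow_ne_zero 2 (by
          intro h; exact hc (by linarith [sub_eq_zero.mp h]))))
      have hsum := add_pos_of_pos_of_nonneg hs (sq_nonneg ((c - γ - Δ1) + (d - δ)))
      have := mul_pos (show (0:ℝ) < p * (1 - p) / 2 by linarith) hsum
      linarith
  · have e := M (fun x1 x2 => (linearScore (α - p * Δ1) β (γ + Δ1) δ x1 x2
      - linearScore α β γ δ x1 x2) ^ 2)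
    exact e.trans (by simp only [linearScore]; ring)
end

section
/- (Lending example: audit based on the targeted explainer achieves first best.) Let X₁ be Bernoulli(1/2) and X₂ be Bernoulli(p) with p ∈ (0,1), X₁ and X₂ independent. Fix real numbers α, β, γ, δ (with s(x₁,x₂) = α + βx₁ + γx₂ + δx₁x₂) and real numbers Δ₀, Δ₁. Consider minimizing, over all (a,b,c,d) ∈ ℝ⁴ defining f(x₁,x₂) = a + bx₁ + cx₂ + dx₁x₂, the objective E[(f(X₁,X₂) − s(X₁,X₂) − Δ₀ − Δ₁X₂)²], subject to the targeted explainer constraints E[f(X₁,X₂) | X₂ = x] = E[s(X₁,X₂) | X₂ = x] for x ∈ {0,1}. Then the unique minimizer is (a,b,c,d) = (α, β, γ, δ), i.e., f = s, so the welfare loss E[(f − s)²] equals 0 and the audit achieves the first best. -/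
open MeasureTheory ProbabilityTheory

section Aux

variable {α' : Type*} [MeasurableSpace α'] {μ : Measure α'} [IsProbabilityMeasure μ]
  {p : ℝ} {X1 X2 : α' → ℝ}

private lemma aux_int (hm1 : Measurable X1) (hv1 : ∀ᵐ ω ∂μ, X1 ω = 0 ∨ X1 ω = 1) :
    Integrable X1 μ := by
  refine (integrable_const (1 : ℝ)).mono' hm1.aestronglyMeasurable ?_
  filter_upwards [hv1] with ω h
  rcases h with h | h <;> simp [h]

private lemma aux_int_mul (hm1 : Measurable X1) (hm2 : Measurable X2)
    (hv1 : ∀ᵐ ω ∂μ, X1 ω = 0 ∨ X1 ω = 1) (hv2 : ∀ᵐ ω ∂μ, X2 ω = 0 ∨ X2 ω = 1) :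
    Integrable (fun ω => X1 ω * X2 ω) μ := by
  refine (integrable_const (1 : ℝ)).mono' (hm1.mul hm2).aestronglyMeasurable ?_
  filter_upwards [hv1, hv2] with ω h1 h2
  rcases h1 with h1 | h1 <;> rcases h2 with h2 | h2 <;> simp [h1, h2]

/-- Master formula: the expectation of any function of `(X1, X2)` is a weighted sum of
its four values. -/
private lemma integral_eval (hm1 : Measurable X1) (hm2 : Measurable X2)
    (hv1 : ∀ᵐ ω ∂μ, X1 ω = 0 ∨ X1 ω = 1) (hv2 : ∀ᵐ ω ∂μ, X2 ω = 0 ∨ X2 ω = 1)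
    (hmean1 : ∫ ω, X1 ω ∂μ = 1 / 2) (hmean2 : ∫ ω, X2 ω ∂μ = p)
    (hindep : IndepFun X1 X2 μ) (h : ℝ → ℝ → ℝ) :
    ∫ ω, h (X1 ω) (X2 ω) ∂μ
      = (1 - p) / 2 * (h 0 0 + h 1 0) + p / 2 * (h 0 1 + h 1 1) := by
  have i1 : Integrable X1 μ := aux_int hm1 hv1
  have i2 : Integrable X2 μ := aux_int hm2 hv2
  have i12 : Integrable (fun ω => X1 ω * X2 ω) μ := aux_int_mul hm1 hm2 hv1 hv2
  have h12 : ∫ ω, X1 ω * X2 ω ∂μ = 1 / 2 * p := by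
    have h' : ∫ ω, X1 ω * X2 ω ∂μ = (∫ ω, X1 ω ∂μ) * ∫ ω, X2 ω ∂μ :=
      hindep.integral_fun_mul_eq_mul_integral i1.1 i2.1
    rw [h', hmean1, hmean2]
  have heq : (fun ω => h (X1 ω) (X2 ω)) =ᵐ[μ]
      (fun ω => h 0 0 + (h 1 0 - h 0 0) * X1 ω + (h 0 1 - h 0 0) * X2 ω
        + (h 0 0 - h 1 0 - h 0 1 + h 1 1) * (X1 ω * X2 ω)) := by
    filter_upwards [hv1, hv2] with ω h1 h2
    rcases h1 with h1 | h1 <;> rcases h2 with h2 | h2 <;> rw [h1, h2] <;> ring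
  rw [integral_congr_ae heq]
  have iB : Integrable (fun ω => h 0 0 + (h 1 0 - h 0 0) * X1 ω) μ :=
    (integrable_const _).add (i1.const_mul _)
  have iC : Integrable (fun ω => h 0 0 + (h 1 0 - h 0 0) * X1 ω
      + (h 0 1 - h 0 0) * X2 ω) μ := iB.add (i2.const_mul _)
  rw [integral_add iC (i12.const_mul _), integral_add iB (i2.const_mul _),
    integral_add (integrable_const _) (i1.const_mul _),
    integral_const, integral_const_mul, integral_const_mul, integral_const_mul,
    hmean1, hmean2, h12]
  simp only [probReal_univ, smul_eq_mul, one_mul]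
  ring

/-- Set-integral version on `{X2 = 0}`. -/
private lemma setIntegral_eval_zero (hm1 : Measurable X1) (hm2 : Measurable X2)
    (hv1 : ∀ᵐ ω ∂μ, X1 ω = 0 ∨ X1 ω = 1) (hv2 : ∀ᵐ ω ∂μ, X2 ω = 0 ∨ X2 ω = 1)
    (hmean1 : ∫ ω, X1 ω ∂μ = 1 / 2) (hmean2 : ∫ ω, X2 ω ∂μ = p)
    (hindep : IndepFun X1 X2 μ) (h : ℝ → ℝ → ℝ) :
    ∫ ω in {ω | X2 ω = 0}, h (X1 ω) (X2 ω) ∂μ = (1 - p) / 2 * (h 0 0 + h 1 0) := by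
  have hs : MeasurableSet {ω | X2 ω = 0} := hm2 (measurableSet_singleton 0)
  rw [← integral_indicator hs]
  have heq : (fun ω => ({ω | X2 ω = 0}).indicator (fun ω => h (X1 ω) (X2 ω)) ω) =ᵐ[μ]
      (fun ω => (fun x y => h x y * (1 - y)) (X1 ω) (X2 ω)) := by
    filter_upwards [hv2] with ω h2
    rcases h2 with h2 | h2
    · simp [Set.indicator, h2]
    · simp [Set.indicator, h2]
  rw [integral_congr_ae heq,
    integral_eval hm1 hm2 hv1 hv2 hmean1 hmean2 hindep (fun x y => h x y * (1 - y))]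
  norm_num

/-- Set-integral version on `{X2 = 1}`. -/
private lemma setIntegral_eval_one (hm1 : Measurable X1) (hm2 : Measurable X2)
    (hv1 : ∀ᵐ ω ∂μ, X1 ω = 0 ∨ X1 ω = 1) (hv2 : ∀ᵐ ω ∂μ, X2 ω = 0 ∨ X2 ω = 1)
    (hmean1 : ∫ ω, X1 ω ∂μ = 1 / 2) (hmean2 : ∫ ω, X2 ω ∂μ = p)
    (hindep : IndepFun X1 X2 μ) (h : ℝ → ℝ → ℝ) :
    ∫ ω in {ω | X2 ω = 1}, h (X1 ω) (X2 ω) ∂μ = p / 2 * (h 0 1 + h 1 1) := by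
  have hs : MeasurableSet {ω | X2 ω = 1} := hm2 (measurableSet_singleton 1)
  rw [← integral_indicator hs]
  have heq : (fun ω => ({ω | X2 ω = 1}).indicator (fun ω => h (X1 ω) (X2 ω)) ω) =ᵐ[μ]
      (fun ω => (fun x y => h x y * y) (X1 ω) (X2 ω)) := by
    filter_upwards [hv2] with ω h2
    rcases h2 with h2 | h2
    · simp [Set.indicator, h2]
    · simp [Set.indicator, h2]
  rw [integral_congr_ae heq,
    integral_eval hm1 hm2 hv1 hv2 hmean1 hmean2 hindep (fun x y => h x y * y)]
  norm_num

end Aux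

set_option maxHeartbeats 1000000

/-- Lending example: audit based on the targeted explainer achieves first
best: with `X₁ ~ Bernoulli(1/2)` and `X₂ ~ Bernoulli(p)` independent and true score
`s = linearScore α β γ δ`, the unique minimizer of `E[(f − s − Δ₀ − Δ₁X₂)²]` over
prediction functions `f = linearScore a b c d` subject to the targeted explainer
constraints `E[f | X₂ = x] = E[s | X₂ = x]` (stated as set-integral equalities over
`{X₂ = x}` for `x ∈ {0,1}`) is `(a,b,c,d) = (α, β, γ, δ)`, i.e. `f = s`, so the welfare
loss `E[(f − s)²]` equals 0. -/
theorem lending_targeted_explainer_audit_first_best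
    {α' : Type*} [MeasurableSpace α'] (μ : Measure α') [IsProbabilityMeasure μ]
    (p : ℝ) (hp0 : 0 < p) (hp1 : p < 1)
    (X1 X2 : α' → ℝ) (hm1 : Measurable X1) (hm2 : Measurable X2)
    (hv1 : ∀ᵐ ω ∂μ, X1 ω = 0 ∨ X1 ω = 1) (hv2 : ∀ᵐ ω ∂μ, X2 ω = 0 ∨ X2 ω = 1)
    (hmean1 : ∫ ω, X1 ω ∂μ = 1 / 2) (hmean2 : ∫ ω, X2 ω ∂μ = p)
    (hindep : IndepFun X1 X2 μ)
    (α β γ δ Δ0 Δ1 : ℝ) :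
    -- `f = s` satisfies the targeted explainer constraints
    (∀ x ∈ ({0, 1} : Set ℝ),
      ∫ ω in {ω | X2 ω = x}, linearScore α β γ δ (X1 ω) (X2 ω) ∂μ
        = ∫ ω in {ω | X2 ω = x}, linearScore α β γ δ (X1 ω) (X2 ω) ∂μ) ∧
    -- it is the unique minimizer of the agent's objective over the constraint set
    (∀ a b c d : ℝ,
      (∀ x ∈ ({0, 1} : Set ℝ),
        ∫ ω in {ω | X2 ω = x}, linearScore a b c d (X1 ω) (X2 ω) ∂μ
          = ∫ ω in {ω | X2 ω = x}, linearScore α β γ δ (X1 ω) (X2 ω) ∂μ) →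
      (a, b, c, d) ≠ (α, β, γ, δ) →
      ∫ ω, (linearScore α β γ δ (X1 ω) (X2 ω)
              - linearScore α β γ δ (X1 ω) (X2 ω) - Δ0 - Δ1 * X2 ω) ^ 2 ∂μ
        < ∫ ω, (linearScore a b c d (X1 ω) (X2 ω)
              - linearScore α β γ δ (X1 ω) (X2 ω) - Δ0 - Δ1 * X2 ω) ^ 2 ∂μ) ∧
    ∫ ω, (linearScore α β γ δ (X1 ω) (X2 ω)
            - linearScore α β γ δ (X1 ω) (X2 ω)) ^ 2 ∂μ = 0 := by
  refine ⟨fun x _ => rfl, ?_, by simp⟩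
  intro a b c d hcon hne
  have hcon0 := hcon 0 (by simp)
  have hcon1 := hcon 1 (by simp)
  -- translate the constraints into algebraic equations
  have hc0 : (1 - p) / 2 * (linearScore a b c d 0 0 + linearScore a b c d 1 0)
      = (1 - p) / 2 * (linearScore α β γ δ 0 0 + linearScore α β γ δ 1 0) := by
    rw [← setIntegral_eval_zero hm1 hm2 hv1 hv2 hmean1 hmean2 hindep
        (linearScore a b c d),
      ← setIntegral_eval_zero hm1 hm2 hv1 hv2 hmean1 hmean2 hindep
        (linearScore α β γ δ)]
    exact hcon0
  have hc1 : p / 2 * (linearScore a b c d 0 1 + linearScore a b c d 1 1)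
      = p / 2 * (linearScore α β γ δ 0 1 + linearScore α β γ δ 1 1) := by
    rw [← setIntegral_eval_one hm1 hm2 hv1 hv2 hmean1 hmean2 hindep
        (linearScore a b c d),
      ← setIntegral_eval_one hm1 hm2 hv1 hv2 hmean1 hmean2 hindep
        (linearScore α β γ δ)]
    exact hcon1
  have e0 : linearScore a b c d 0 0 + linearScore a b c d 1 0
      = linearScore α β γ δ 0 0 + linearScore α β γ δ 1 0 :=
    mul_left_cancel₀ (show ((1 - p) / 2 : ℝ) ≠ 0 from (by linarith : (0:ℝ) < (1 - p) / 2).ne') hc0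
  have e1 : linearScore a b c d 0 1 + linearScore a b c d 1 1
      = linearScore α β γ δ 0 1 + linearScore α β γ δ 1 1 :=
    mul_left_cancel₀ (show (p / 2 : ℝ) ≠ 0 from (by linarith : (0:ℝ) < p / 2).ne') hc1
  simp only [linearScore] at e0 e1
  -- evaluate both objective integrals
  have hL : ∫ ω, (linearScore α β γ δ (X1 ω) (X2 ω)
        - linearScore α β γ δ (X1 ω) (X2 ω) - Δ0 - Δ1 * X2 ω) ^ 2 ∂μ
      = (1 - p) / 2 * ((linearScore α β γ δ 0 0 - linearScore α β γ δ 0 0 - Δ0 - Δ1 * 0) ^ 2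
          + (linearScore α β γ δ 1 0 - linearScore α β γ δ 1 0 - Δ0 - Δ1 * 0) ^ 2)
        + p / 2 * ((linearScore α β γ δ 0 1 - linearScore α β γ δ 0 1 - Δ0 - Δ1 * 1) ^ 2
          + (linearScore α β γ δ 1 1 - linearScore α β γ δ 1 1 - Δ0 - Δ1 * 1) ^ 2) :=
    integral_eval hm1 hm2 hv1 hv2 hmean1 hmean2 hindep
      (fun x y => (linearScore α β γ δ x y - linearScore α β γ δ x y - Δ0 - Δ1 * y) ^ 2)
  have hR : ∫ ω, (linearScore a b c d (X1 ω) (X2 ω)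
        - linearScore α β γ δ (X1 ω) (X2 ω) - Δ0 - Δ1 * X2 ω) ^ 2 ∂μ
      = (1 - p) / 2 * ((linearScore a b c d 0 0 - linearScore α β γ δ 0 0 - Δ0 - Δ1 * 0) ^ 2
          + (linearScore a b c d 1 0 - linearScore α β γ δ 1 0 - Δ0 - Δ1 * 0) ^ 2)
        + p / 2 * ((linearScore a b c d 0 1 - linearScore α β γ δ 0 1 - Δ0 - Δ1 * 1) ^ 2
          + (linearScore a b c d 1 1 - linearScore α β γ δ 1 1 - Δ0 - Δ1 * 1) ^ 2) :=
    integral_eval hm1 hm2 hv1 hv2 hmean1 hmean2 hindep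
      (fun x y => (linearScore a b c d x y - linearScore α β γ δ x y - Δ0 - Δ1 * y) ^ 2)
  rw [hL, hR]
  simp only [linearScore]
  -- the difference equals a positive combination of squares
  have key : ((1 - p) / 2 * ((a + b * 0 + c * 0 + d * 0 * 0 - (α + β * 0 + γ * 0 + δ * 0 * 0) - Δ0 - Δ1 * 0) ^ 2
          + (a + b * 1 + c * 0 + d * 1 * 0 - (α + β * 1 + γ * 0 + δ * 1 * 0) - Δ0 - Δ1 * 0) ^ 2)
        + p / 2 * ((a + b * 0 + c * 1 + d * 0 * 1 - (α + β * 0 + γ * 1 + δ * 0 * 1) - Δ0 - Δ1 * 1) ^ 2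
          + (a + b * 1 + c * 1 + d * 1 * 1 - (α + β * 1 + γ * 1 + δ * 1 * 1) - Δ0 - Δ1 * 1) ^ 2))
      - ((1 - p) / 2 * ((α + β * 0 + γ * 0 + δ * 0 * 0 - (α + β * 0 + γ * 0 + δ * 0 * 0) - Δ0 - Δ1 * 0) ^ 2
          + (α + β * 1 + γ * 0 + δ * 1 * 0 - (α + β * 1 + γ * 0 + δ * 1 * 0) - Δ0 - Δ1 * 0) ^ 2)
        + p / 2 * ((α + β * 0 + γ * 1 + δ * 0 * 1 - (α + β * 0 + γ * 1 + δ * 0 * 1) - Δ0 - Δ1 * 1) ^ 2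
          + (α + β * 1 + γ * 1 + δ * 1 * 1 - (α + β * 1 + γ * 1 + δ * 1 * 1) - Δ0 - Δ1 * 1) ^ 2))
      = (1 - p) / 2 * ((a - α) ^ 2 + (a + b - α - β) ^ 2)
        + p / 2 * ((a + c - α - γ) ^ 2 + (a + b + c + d - α - β - γ - δ) ^ 2) := by
    linear_combination (-(Δ0 * (1 - p))) * e0 + (-((Δ0 + Δ1) * p)) * e1
  have hd : a ≠ α ∨ b ≠ β ∨ c ≠ γ ∨ d ≠ δ := by
    by_contra h
    push_neg at h
    exact hne (by simp [Prod.ext_iff, h.1, h.2.1, h.2.2.1, h.2.2.2])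
  -- from the constraints, b = β - 2(a - α) and d = δ - 2(c - γ)
  have hb : b - β = -2 * (a - α) := by linarith
  have hdd : d - δ = -2 * (c - γ) := by linarith
  have hpos : 0 < (1 - p) / 2 * ((a - α) ^ 2 + (a + b - α - β) ^ 2)
      + p / 2 * ((a + c - α - γ) ^ 2 + (a + b + c + d - α - β - γ - δ) ^ 2) := by
    rcases eq_or_ne a α with haα | haα
    · have hbβ : b = β := by linarith [hb, sub_eq_zero.mpr haα]
      rcases eq_or_ne c γ with hcγ | hcγ
      · have hdδ : d = δ := by
          have : c - γ = 0 := sub_eq_zero.mpr hcγ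
          linarith [hdd]
        rcases hd with h | h | h | h <;> exact absurd (by assumption) h
      · have h1 : 0 < (a + c - α - γ) ^ 2 := by
          have : a + c - α - γ ≠ 0 := by
            rw [haα]; intro h; exact hcγ (by linarith)
          positivity
        have t1 : 0 ≤ (1 - p) / 2 * (a - α) ^ 2 :=
          mul_nonneg (by linarith) (sq_nonneg _)
        have t2 : 0 ≤ (1 - p) / 2 * (a + b - α - β) ^ 2 :=
          mul_nonneg (by linarith) (sq_nonneg _)
        have t3 : 0 < p / 2 * (a + c - α - γ) ^ 2 :=
          mul_pos (by linarith) h1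
        have t4 : 0 ≤ p / 2 * (a + b + c + d - α - β - γ - δ) ^ 2 :=
          mul_nonneg (by linarith) (sq_nonneg _)
        linarith only [t1, t2, t3, t4]
    · have h1 : 0 < (a - α) ^ 2 := by
        have : a - α ≠ 0 := sub_ne_zero.mpr haα
        positivity
      have t1 : 0 < (1 - p) / 2 * (a - α) ^ 2 :=
        mul_pos (by linarith) h1
      have t2 : 0 ≤ (1 - p) / 2 * (a + b - α - β) ^ 2 :=
        mul_nonneg (by linarith) (sq_nonneg _)
      have t3 : 0 ≤ p / 2 * (a + c - α - γ) ^ 2 :=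
        mul_nonneg (by linarith) (sq_nonneg _)
      have t4 : 0 ≤ p / 2 * (a + b + c + d - α - β - γ - δ) ^ 2 :=
        mul_nonneg (by linarith) (sq_nonneg _)
      linarith only [t1, t2, t3, t4]
  linarith only [key, hpos]
end
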